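/- arXiv:2304.14231 — 11 statements merged into one kernel-verified Lean document; each statement's English description precedes it below -/
import Mathlib

section
/- If a bridgeless graph G admits an oriented 3-cycle double cover (a collection of 3 directed cycles such that every edge lies in exactly two of them with opposite directions), then G admits a 2-dimensional nowhere-zero 2-flow, i.e. an orientation together with an assignment φ : E(G) → ℝ² satisfying Kirchhoff's law at every vertex such that the Euclidean norm of φ(e) equals 1 for every edge e. -/
open scoped BigOperators

noncomputable section

/-- The vector `(x, y)` in the Euclidean plane `ℝ²`. -/
def vec2 (x y : ℝ) : EuclideanSpace ℝ (Fin 2) := (WithLp.equiv 2 (Fin 2 → ℝ)).symm ![x, y]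

/-- `f` is a `d`-dimensional nowhere-zero `r`-flow ((r,d)-NZF) on the graph `G`.
We encode an orientation together with a flow as a skew-symmetric function on ordered
pairs of vertices, supported on adjacent pairs, whose values (on edges) have Euclidean
norm in `[1, r-1]`, and which satisfies Kirchhoff's law at every vertex. -/
def IsNZF {V : Type} [Fintype V] (G : SimpleGraph V) (d : ℕ) (r : ℝ)
    (f : V → V → EuclideanSpace ℝ (Fin d)) : Prop :=
  (∀ u v, f u v = - f v u) ∧
  (∀ u v, ¬ G.Adj u v → f u v = 0) ∧
  (∀ u v, G.Adj u v → 1 ≤ ‖f u v‖ ∧ ‖f u v‖ ≤ r - 1) ∧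
  (∀ v, ∑ u, f v u = 0)

/-- `G` admits an `(r,d)`-NZF. -/
def HasNZF {V : Type} [Fintype V] (G : SimpleGraph V) (d : ℕ) (r : ℝ) : Prop :=
  ∃ f, IsNZF G d r f

/-- A graph is bridgeless if none of its edges is a bridge. -/
def Bridgeless {V : Type} (G : SimpleGraph V) : Prop :=
  ∀ e ∈ G.edgeSet, ¬ G.IsBridge e

/-- A directed cycle of (an orientation of) `G`, encoded by its signed characteristic
function: `g u v = 1` if the cycle contains the dart `u → v`, `g u v = -1` if it contains
`v → u`, and `0` otherwise. Every vertex has equal indegree and outdegree, i.e. Kirchhoff's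
law holds. -/
def IsDirCycle {V : Type} [Fintype V] (G : SimpleGraph V) (g : V → V → ℤ) : Prop :=
  (∀ u v, g u v = - g v u) ∧
  (∀ u v, ¬ G.Adj u v → g u v = 0) ∧
  (∀ u v, g u v = 0 ∨ g u v = 1 ∨ g u v = -1) ∧
  (∀ v, ∑ u, g v u = 0)

/-- An oriented `k`-cycle double cover of `G`: `k` directed cycles such that every edge of
`G` lies in exactly two of them, with opposite directions. -/
def IsOCDC {V : Type} [Fintype V] (G : SimpleGraph V) (k : ℕ) (g : Fin k → V → V → ℤ) : Prop :=
  (∀ i, IsDirCycle G (g i)) ∧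
  (∀ u v, G.Adj u v → ∃ i j, i ≠ j ∧ g i u v = 1 ∧ g j u v = -1 ∧
    ∀ l, l ≠ i → l ≠ j → g l u v = 0)

/-!
Send the `i`-th cycle of the double cover to a point `w i` of the plane and let the flow be
`∑ i, g i • w i`. As a combination of circulations it is a circulation; on an edge traversed
forwards by cycle `i` and backwards by cycle `j` its value is `w i - w j`. Taking the `w i` to be
the vertices of a unit equilateral triangle therefore makes every value a unit vector.
-/

section CycleCombination

variable {V ι E : Type} [Fintype ι] [AddCommGroup E] [Module ℝ E]

def cycleCombination (g : ι → V → V → ℤ) (w : ι → E) (u v : V) : E :=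
  ∑ i, (g i u v : ℝ) • w i

variable {g : ι → V → V → ℤ} (w : ι → E)

lemma cycleCombination_eq_sub [DecidableEq ι] {i j : ι} {u v : V} (hij : i ≠ j)
    (hi : g i u v = 1) (hj : g j u v = -1) (hl : ∀ l, l ≠ i → l ≠ j → g l u v = 0) :
    cycleCombination g w u v = w i - w j := by
  rw [cycleCombination, ← Finset.sum_subset (Finset.subset_univ {i, j}), Finset.sum_pair hij,
    hi, hj, Int.cast_one, Int.cast_neg, Int.cast_one, one_smul, neg_one_smul, sub_eq_add_neg]
  intro l _ hl'
  simp only [Finset.mem_insert, Finset.mem_singleton, not_or] at hl'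
  rw [hl l hl'.1 hl'.2, Int.cast_zero, zero_smul]

variable [Fintype V] {G : SimpleGraph V}

lemma cycleCombination_swap (hg : ∀ i, IsDirCycle G (g i)) (u v : V) :
    cycleCombination g w u v = - cycleCombination g w v u := by
  simp only [cycleCombination, ← Finset.sum_neg_distrib, ← neg_smul]
  refine Finset.sum_congr rfl fun i _ => ?_
  rw [(hg i).1 u v, Int.cast_neg]

lemma cycleCombination_of_not_adj (hg : ∀ i, IsDirCycle G (g i)) {u v : V}
    (huv : ¬ G.Adj u v) : cycleCombination g w u v = 0 :=
  Finset.sum_eq_zero fun i _ => by rw [(hg i).2.1 u v huv, Int.cast_zero, zero_smul]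

lemma sum_cycleCombination (hg : ∀ i, IsDirCycle G (g i)) (v : V) :
    ∑ u, cycleCombination g w v u = 0 := by
  simp only [cycleCombination]
  rw [Finset.sum_comm]
  refine Finset.sum_eq_zero fun i _ => ?_
  rw [← Finset.sum_smul, ← Int.cast_sum, (hg i).2.2.2 v, Int.cast_zero, zero_smul]

end CycleCombination

theorem IsOCDC.cycleCombination_isNZF {V : Type} [Fintype V] {G : SimpleGraph V} {k d : ℕ}
    {g : Fin k → V → V → ℤ} (hg : IsOCDC G k g) {w : Fin k → EuclideanSpace ℝ (Fin d)}
    (hw : ∀ i j, i ≠ j → ‖w i - w j‖ = 1) :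
    IsNZF G d 2 (cycleCombination g w) ∧ ∀ u v, G.Adj u v → ‖cycleCombination g w u v‖ = 1 := by
  have hunit : ∀ u v, G.Adj u v → ‖cycleCombination g w u v‖ = 1 := by
    intro u v huv
    obtain ⟨i, j, hij, hi, hj, hl⟩ := hg.2 u v huv
    rw [cycleCombination_eq_sub w hij hi hj hl, hw i j hij]
  refine ⟨⟨cycleCombination_swap w hg.1, fun u v => cycleCombination_of_not_adj w hg.1,
    fun u v huv => ?_, sum_cycleCombination w hg.1⟩, hunit⟩
  rw [hunit u v huv]
  norm_num

lemma norm_vec2_sub_vec2 (x y x' y' : ℝ) :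
    ‖vec2 x y - vec2 x' y'‖ = Real.sqrt ((x - x') ^ 2 + (y - y') ^ 2) := by
  simp [vec2, EuclideanSpace.norm_eq, Fin.sum_univ_two]

def unitTriangle : Fin 3 → EuclideanSpace ℝ (Fin 2) :=
  ![vec2 0 0, vec2 1 0, vec2 (1 / 2) (Real.sqrt 3 / 2)]

lemma norm_unitTriangle_sub {i j : Fin 3} (hij : i ≠ j) :
    ‖unitTriangle i - unitTriangle j‖ = 1 := by
  have h3 : Real.sqrt 3 ^ 2 = 3 := Real.sq_sqrt (by norm_num)
  fin_cases i <;> fin_cases j <;> simp only [ne_eq, not_true_eq_false] at hij <;>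
    simp [unitTriangle, norm_vec2_sub_vec2, Real.sqrt_eq_one] <;> nlinarith [h3]

theorem stmt_0_general {V : Type} [Fintype V] (G : SimpleGraph V)
    (g : Fin 3 → V → V → ℤ) (hg : IsOCDC G 3 g) :
    ∃ f : V → V → EuclideanSpace ℝ (Fin 2),
      IsNZF G 2 2 f ∧ ∀ u v, G.Adj u v → ‖f u v‖ = 1 :=
  ⟨_, hg.cycleCombination_isNZF fun _ _ => norm_unitTriangle_sub⟩

/-- If a bridgeless graph admits an oriented 3-cycle double cover, then it admits a
2-dimensional nowhere-zero 2-flow: every flow value is a unit vector of `ℝ²`. -/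
theorem stmt_0 {V : Type} [Fintype V] (G : SimpleGraph V) (hG : Bridgeless G)
    (g : Fin 3 → V → V → ℤ) (hg : IsOCDC G 3 g) :
    ∃ f : V → V → EuclideanSpace ℝ (Fin 2),
      IsNZF G 2 2 f ∧ ∀ u v, G.Adj u v → ‖f u v‖ = 1 :=
  stmt_0_general G g hg
end
end

section
/- If a bridgeless graph G admits an oriented 4-cycle double cover, then G admits a (1+√2, 2)-NZF, i.e. an orientation and an assignment φ : E(G) → ℝ² satisfying Kirchhoff's law at every vertex with 1 ≤ ‖φ(e)‖ ≤ √2 for every edge e. -/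
open scoped BigOperators

noncomputable section

lemma norm_vec2 (x y : ℝ) : ‖vec2 x y‖ = Real.sqrt (x ^ 2 + y ^ 2) := by
  rw [EuclideanSpace.norm_eq]
  have h0 : (vec2 x y) 0 = x := rfl
  have h1 : (vec2 x y) 1 = y := rfl
  simp [Fin.sum_univ_two, h0, h1, sq_abs]

lemma vec2_sub (x y x' y' : ℝ) : vec2 x y - vec2 x' y' = vec2 (x - x') (y - y') := by
  ext k
  fin_cases k <;> rfl

def wvec : Fin 4 → EuclideanSpace ℝ (Fin 2) := ![vec2 0 0, vec2 1 0, vec2 0 1, vec2 1 1]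

lemma vec2_bd (x y : ℝ) (h : x ^ 2 + y ^ 2 = 1 ∨ x ^ 2 + y ^ 2 = 2) :
    1 ≤ ‖vec2 x y‖ ∧ ‖vec2 x y‖ ≤ Real.sqrt 2 := by
  rw [norm_vec2]
  rcases h with h | h <;> rw [h]
  · exact ⟨by rw [Real.sqrt_one], Real.sqrt_le_sqrt (by norm_num)⟩
  · refine ⟨?_, le_refl _⟩
    rw [show (1:ℝ) = Real.sqrt 1 from Real.sqrt_one.symm]
    exact Real.sqrt_le_sqrt (by norm_num)

lemma pair_bound (i j : Fin 4) (hij : i ≠ j) :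
    1 ≤ ‖wvec i - wvec j‖ ∧ ‖wvec i - wvec j‖ ≤ Real.sqrt 2 := by
  fin_cases i <;> fin_cases j <;> simp [wvec, vec2_sub, norm_vec2]
  all_goals first
    | exact absurd rfl hij
    | norm_num

/-- If a bridgeless graph admits an oriented 4-cycle double cover, then it admits a
`(1+√2, 2)`-NZF. -/
theorem stmt_1 {V : Type} [Fintype V] (G : SimpleGraph V) (hG : Bridgeless G)
    (g : Fin 4 → V → V → ℤ) (hg : IsOCDC G 4 g) :
    HasNZF G 2 (1 + Real.sqrt 2) := by
  obtain ⟨hcyc, hcov⟩ := hg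
  refine ⟨fun u v => ∑ i, (g i u v : ℝ) • wvec i, ?_, ?_, ?_, ?_⟩
  · intro u v
    rw [← Finset.sum_neg_distrib]
    refine Finset.sum_congr rfl fun i _ => ?_
    rw [(hcyc i).1 u v]
    push_cast
    rw [neg_smul]
  · intro u v h
    refine Finset.sum_eq_zero fun i _ => ?_
    rw [(hcyc i).2.1 u v h]
    simp
  · intro u v h
    obtain ⟨i, j, hij, hi, hj, ho⟩ := hcov u v h
    dsimp only
    have hsum : (∑ l, (g l u v : ℝ) • wvec l) = wvec i - wvec j := by
      have key : ∀ l, (g l u v : ℝ) • wvec l =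
          (if l = i then wvec i else 0) + (if l = j then -(wvec j) else 0) := by
        intro l
        by_cases hli : l = i
        · subst hli
          simp [hi, hij]
        · by_cases hlj : l = j
          · subst hlj
            simp [hj, hli]
          · simp [hli, hlj, ho l hli hlj]
      rw [Finset.sum_congr rfl fun l _ => key l, Finset.sum_add_distrib,
        Finset.sum_ite_eq' Finset.univ i, Finset.sum_ite_eq' Finset.univ j]
      simp [sub_eq_add_neg]
    rw [hsum]
    rw [show (1:ℝ) + Real.sqrt 2 - 1 = Real.sqrt 2 by ring]
    exact pair_bound i j hij
  · intro v
    rw [Finset.sum_comm]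
    refine Finset.sum_eq_zero fun i _ => ?_
    rw [← Finset.sum_smul]
    have : (∑ u, (g i v u : ℝ)) = ((∑ u, g i v u : ℤ) : ℝ) := by push_cast; ring
    rw [this, (hcyc i).2.2.2 v]
    simp
end
end

section
/- If a bridgeless graph G admits an oriented 5-cycle double cover, then G admits a (τ², 2)-NZF, where τ = (1+√5)/2 is the golden ratio; that is, there is an orientation and an assignment φ : E(G) → ℝ² satisfying Kirchhoff's law at every vertex with 1 ≤ ‖φ(e)‖ ≤ τ for every edge e (note τ² − 1 = τ). -/
open scoped BigOperators

noncomputable section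

/-
Attach to the five cycles of the double cover the vertices `P₀, …, P₄` of a regular pentagon
with unit side, and send each dart `u → v` to `∑ᵢ gᵢ(u, v) • Pᵢ`. Being a combination of directed
cycles, this satisfies Kirchhoff's law; on an edge traversed forwards by cycle `i` and backwards
by cycle `j` its value is `Pᵢ - Pⱼ`, whose length is a side `1` or a diagonal `φ = φ² - 1`.
-/

open Real goldenRatio

lemma vec2_sub_vec2 (a b c d : ℝ) : vec2 a b - vec2 c d = vec2 (a - c) (b - d) := by
  ext i; fin_cases i <;> simp [vec2]

lemma norm_vec2_sq (a b : ℝ) : ‖vec2 a b‖ ^ 2 = a ^ 2 + b ^ 2 := by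
  simp [EuclideanSpace.norm_sq_eq, vec2, Fin.sum_univ_two]

section CycleSumFlow

variable {V : Type} [Fintype V] {G : SimpleGraph V} {k : ℕ} {g : Fin k → V → V → ℤ}
  {E : Type*} [AddCommGroup E] [Module ℝ E]

def cycleSumFlow (g : Fin k → V → V → ℤ) (P : Fin k → E) (u v : V) : E :=
  ∑ i, (g i u v : ℝ) • P i

lemma cycleSumFlow_swap (hg : ∀ i, IsDirCycle G (g i)) (P : Fin k → E) (u v : V) :
    cycleSumFlow g P u v = - cycleSumFlow g P v u := by
  simp [cycleSumFlow, (hg _).1 u v, ← Finset.sum_neg_distrib]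

lemma cycleSumFlow_eq_zero_of_not_adj (hg : ∀ i, IsDirCycle G (g i)) (P : Fin k → E) {u v : V}
    (huv : ¬ G.Adj u v) : cycleSumFlow g P u v = 0 := by
  simp [cycleSumFlow, (hg _).2.1 u v huv]

lemma sum_cycleSumFlow (hg : ∀ i, IsDirCycle G (g i)) (P : Fin k → E) (v : V) :
    ∑ u, cycleSumFlow g P v u = 0 := by
  simp only [cycleSumFlow]
  rw [Finset.sum_comm]
  refine Finset.sum_eq_zero fun i _ => ?_
  rw [← Finset.sum_smul, ← Int.cast_sum, (hg i).2.2.2 v, Int.cast_zero, zero_smul]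

lemma IsOCDC.exists_cycleSumFlow_eq_sub (hg : IsOCDC G k g) (P : Fin k → E) {u v : V}
    (huv : G.Adj u v) : ∃ i j, i ≠ j ∧ cycleSumFlow g P u v = P i - P j := by
  obtain ⟨i, j, hij, hi, hj, hrest⟩ := hg.2 u v huv
  refine ⟨i, j, hij, ?_⟩
  rw [cycleSumFlow, ← Finset.sum_subset (Finset.subset_univ {i, j})]
  · simp [Finset.sum_pair hij, hi, hj, sub_eq_add_neg]
  · intro l _ hl
    simp only [Finset.mem_insert, Finset.mem_singleton, not_or] at hl
    simp [hrest l hl.1 hl.2]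

lemma IsOCDC.hasNZF {d : ℕ} {r : ℝ} (hg : IsOCDC G k g) (P : Fin k → EuclideanSpace ℝ (Fin d))
    (hP : ∀ i j, i ≠ j → 1 ≤ ‖P i - P j‖ ∧ ‖P i - P j‖ ≤ r - 1) : HasNZF G d r := by
  refine ⟨cycleSumFlow g P, cycleSumFlow_swap hg.1 P,
    fun u v => cycleSumFlow_eq_zero_of_not_adj hg.1 P, fun u v huv => ?_, sum_cycleSumFlow hg.1 P⟩
  obtain ⟨i, j, hij, h⟩ := hg.exists_cycleSumFlow_eq_sub P huv
  exact h ▸ hP i j hij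

end CycleSumFlow

/-- The regular pentagon with unit side, symmetric about the second axis; its diagonals have
length `φ`. -/
def pentagon : Fin 5 → EuclideanSpace ℝ (Fin 2) :=
  let s := √(2 + φ) / 2
  let h := √(4 * φ + 3) / 2
  ![vec2 (-1 / 2) 0, vec2 (1 / 2) 0, vec2 (φ / 2) s, vec2 0 h, vec2 (-φ / 2) s]

lemma pentagon_dist_sq {i j : Fin 5} (hij : i ≠ j) :
    ‖pentagon i - pentagon j‖ ^ 2 = 1 ∨ ‖pentagon i - pentagon j‖ ^ 2 = φ ^ 2 := by
  have hφ := goldenRatio_sq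
  have hs : (√(2 + φ) / 2) ^ 2 = (2 + φ) / 4 := by
    rw [div_pow, sq_sqrt (by linarith [goldenRatio_pos])]; norm_num
  have hh : (√(4 * φ + 3) / 2) ^ 2 = (4 * φ + 3) / 4 := by
    rw [div_pow, sq_sqrt (by linarith [goldenRatio_pos])]; norm_num
  have hsh : (√(2 + φ) / 2) * (√(4 * φ + 3) / 2) = (3 * φ + 1) / 4 := by
    rw [div_mul_div_comm, ← sqrt_mul (by linarith [goldenRatio_pos]),
      show (2 + φ) * (4 * φ + 3) = (3 * φ + 1) ^ 2 by linear_combination (-5) * hφ,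
      sqrt_sq (by linarith [goldenRatio_pos])]
    norm_num
  fin_cases i <;> fin_cases j <;>
    simp [pentagon, vec2_sub_vec2, norm_vec2_sq, -sq_eq_one_iff] at hij ⊢ <;>
    first
    | (left; nlinarith)
    | (right; nlinarith)

lemma pentagon_dist {i j : Fin 5} (hij : i ≠ j) :
    1 ≤ ‖pentagon i - pentagon j‖ ∧ ‖pentagon i - pentagon j‖ ≤ φ := by
  have := norm_nonneg (pentagon i - pentagon j)
  rcases pentagon_dist_sq hij with h | h <;> constructor <;> nlinarith [one_lt_goldenRatio]

theorem stmt_2_general {V : Type} [Fintype V] (G : SimpleGraph V)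
    (g : Fin 5 → V → V → ℤ) (hg : IsOCDC G 5 g) :
    HasNZF G 2 (((1 + Real.sqrt 5) / 2) ^ 2) :=
  hg.hasNZF pentagon fun _ _ hij => by
    rw [← goldenRatio, goldenRatio_sq, add_sub_cancel_right]
    exact pentagon_dist hij

/-- If a bridgeless graph admits an oriented 5-cycle double cover, then it admits a
`(τ², 2)`-NZF, where `τ = (1+√5)/2` is the golden ratio (note `τ² - 1 = τ`). -/
theorem stmt_2 {V : Type} [Fintype V] (G : SimpleGraph V) (hG : Bridgeless G)
    (g : Fin 5 → V → V → ℤ) (hg : IsOCDC G 5 g) :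
    HasNZF G 2 (((1 + Real.sqrt 5) / 2) ^ 2) :=
  stmt_2_general G g hg
end
end

section
/- Let G be a bridgeless cubic graph containing a chordless cycle C of length k, and suppose G admits an (r,2)-NZF for some r ≥ 2. Then the wheel graph W_k (a k-cycle plus a hub vertex joined to all cycle vertices) admits an (r,2)-NZF; consequently φ₂(G) ≥ φ₂(W_k). -/
open scoped BigOperators

noncomputable section

/-- The wheel graph `W_k` of order `k+1`: a `k`-cycle (on `some i`, `i : ZMod k`)
together with a hub vertex `none` adjacent to all cycle vertices. -/
def wheelGraph (k : ℕ) : SimpleGraph (Option (ZMod k)) :=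
  SimpleGraph.fromRel (fun a b => a = none ∨ ∃ i : ZMod k, a = some i ∧ b = some (i + 1))

lemma wheel_adj_none_some {k : ℕ} (i : ZMod k) : (wheelGraph k).Adj none (some i) := by
  refine ⟨by simp, Or.inl (Or.inl rfl)⟩

lemma wheel_adj_some_iff {k : ℕ} (h1 : (1 : ZMod k) ≠ 0) (i j : ZMod k) :
    (wheelGraph k).Adj (some i) (some j) ↔ (j = i + 1 ∨ i = j + 1) := by
  constructor
  · rintro ⟨hne, h | h⟩
    · rcases h with h | ⟨m, hm1, hm2⟩
      · simp at h
      · exact Or.inl (by simp_all)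
    · rcases h with h | ⟨m, hm1, hm2⟩
      · simp at h
      · exact Or.inr (by simp_all)
  · rintro (h | h)
    · refine ⟨?_, Or.inl (Or.inr ⟨i, rfl, by rw [h]⟩)⟩
      simp only [ne_eq, Option.some.injEq]
      intro hij
      rw [← hij] at h
      exact h1 (by linear_combination -h)
    · refine ⟨?_, Or.inr (Or.inr ⟨j, rfl, by rw [h]⟩)⟩
      simp only [ne_eq, Option.some.injEq]
      intro hij
      rw [hij] at h
      exact h1 (by linear_combination -h)

/-- If a bridgeless cubic graph `G` contains a chordless cycle of length `k` and admits an
`(r,2)`-NZF (`r ≥ 2`), then the wheel graph `W_k` admits an `(r,2)`-NZF; consequently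
`φ₂(G) ≥ φ₂(W_k)`. -/
theorem stmt_6 {V : Type} [Fintype V] (G : SimpleGraph V) [DecidableRel G.Adj]
    (hbridgeless : Bridgeless G) (hcubic : ∀ v, G.degree v = 3)
    (k : ℕ) [NeZero k] (hk : 3 ≤ k)
    (c : ZMod k → V) (hinj : Function.Injective c)
    (hcyc : ∀ i, G.Adj (c i) (c (i + 1)))
    (hchordless : ∀ i j : ZMod k, G.Adj (c i) (c j) → j = i + 1 ∨ i = j + 1)
    (r : ℝ) (hr : 2 ≤ r) (hG : HasNZF G 2 r) :
    HasNZF (wheelGraph k) 2 r := by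
  classical
  obtain ⟨f, hskew, hzero, hnorm, hkirch⟩ := hG
  -- basic ZMod facts
  have h1 : (1 : ZMod k) ≠ 0 := by
    intro h
    have h1' : ((1 : ℕ) : ZMod k) = 0 := by exact_mod_cast h
    rw [ZMod.natCast_eq_zero_iff] at h1'
    have := Nat.le_of_dvd one_pos h1'
    omega
  have h2 : (2 : ZMod k) ≠ 0 := by
    intro h
    have h2' : ((2 : ℕ) : ZMod k) = 0 := by exact_mod_cast h
    rw [ZMod.natCast_eq_zero_iff] at h2'
    have := Nat.le_of_dvd two_pos h2'
    omega
  have hmm : ∀ i : ZMod k, i - 1 ≠ i + 1 := by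
    intro i h
    exact h2 (by linear_combination (i + 1) - h)
  -- third neighbour
  have exists_w : ∀ i : ZMod k, ∃ w : V, G.Adj (c i) w ∧
      f (c i) (c (i - 1)) + f (c i) (c (i + 1)) + f (c i) w = 0 := by
    intro i
    set S := G.neighborFinset (c i) with hS
    have hcard : S.card = 3 := by rw [hS, G.card_neighborFinset_eq_degree]; exact hcubic _
    have ha : c (i - 1) ∈ S := by
      rw [hS, SimpleGraph.mem_neighborFinset]
      have := hcyc (i - 1)
      rw [sub_add_cancel] at this
      exact this.symm
    have hb : c (i + 1) ∈ S := by
      rw [hS, SimpleGraph.mem_neighborFinset]; exact hcyc i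
    have hab : c (i - 1) ≠ c (i + 1) := fun h => hmm i (hinj h)
    have hsub : ({c (i - 1), c (i + 1)} : Finset V) ⊆ S := by
      intro x hx
      simp only [Finset.mem_insert, Finset.mem_singleton] at hx
      rcases hx with rfl | rfl <;> assumption
    have hcard2 : ({c (i - 1), c (i + 1)} : Finset V).card = 2 := by
      rw [Finset.card_insert_of_notMem (by simpa using hab), Finset.card_singleton]
    have hdiff : (S \ {c (i - 1), c (i + 1)}).card = 1 := by
      rw [Finset.card_sdiff_of_subset hsub, hcard, hcard2]
    obtain ⟨w, hw⟩ := Finset.card_eq_one.mp hdiff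
    have hwS : w ∈ S ∧ w ∉ ({c (i - 1), c (i + 1)} : Finset V) := by
      have : w ∈ S \ {c (i - 1), c (i + 1)} := by rw [hw]; simp
      exact Finset.mem_sdiff.mp this
    have hwadj : G.Adj (c i) w := (SimpleGraph.mem_neighborFinset _ _ _).mp hwS.1
    have hwa : w ≠ c (i - 1) := fun h => hwS.2 (by simp [h])
    have hwb : w ≠ c (i + 1) := fun h => hwS.2 (by simp [h])
    refine ⟨w, hwadj, ?_⟩
    have hSeq : S = insert (c (i - 1)) (insert (c (i + 1)) {w}) := by
      apply (Finset.eq_of_subset_of_card_le ?_ ?_).symm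
      · intro x hx
        simp only [Finset.mem_insert, Finset.mem_singleton] at hx
        rcases hx with rfl | rfl | rfl
        exacts [ha, hb, hwS.1]
      · rw [hcard, Finset.card_insert_of_notMem (by simp [hab, Ne.symm hwa]),
          Finset.card_insert_of_notMem (by simp [Ne.symm hwb]), Finset.card_singleton]
    have hsum : ∑ u ∈ S, f (c i) u = ∑ u : V, f (c i) u := by
      apply Finset.sum_subset (Finset.subset_univ _)
      intro x _ hx
      exact hzero _ _ (fun hadj => hx ((SimpleGraph.mem_neighborFinset _ _ _).mpr hadj))
    rw [hkirch] at hsum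
    rw [hSeq] at hsum
    rw [Finset.sum_insert (by simp [hab, (Ne.symm hwa)]),
      Finset.sum_insert (by simp [(Ne.symm hwb)]), Finset.sum_singleton] at hsum
    linear_combination (norm := abel) hsum
  choose w hwadj hwsum using exists_w
  -- the flow on the wheel
  set g : Option (ZMod k) → Option (ZMod k) → EuclideanSpace ℝ (Fin 2) := fun a b =>
    match a, b with
    | none, none => 0
    | none, some i => - f (c i) (w i)
    | some i, none => f (c i) (w i)
    | some i, some j => if j = i + 1 ∨ i = j + 1 then f (c i) (c j) else 0
    with hg
  refine ⟨g, ?_, ?_, ?_, ?_⟩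
  · rintro (_ | i) (_ | j)
    · simp [hg]
    · simp [hg]
    · simp [hg]
    · simp only [hg]
      by_cases h : j = i + 1 ∨ i = j + 1
      · rw [if_pos h, if_pos h.symm, hskew]
      · rw [if_neg h, if_neg (fun h' => h h'.symm), neg_zero]
  · rintro (_ | i) (_ | j) hadj
    · simp [hg]
    · exact absurd (wheel_adj_none_some j) hadj
    · exact absurd (wheel_adj_none_some i).symm hadj
    · simp only [hg]
      rw [if_neg (fun h => hadj ((wheel_adj_some_iff h1 i j).mpr h))]
  · rintro (_ | i) (_ | j) hadj
    · exact absurd hadj (wheelGraph k).irrefl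
    · simp only [hg, norm_neg]
      exact hnorm _ _ (hwadj j)
    · exact hnorm _ _ (hwadj i)
    · rcases (wheel_adj_some_iff h1 i j).mp hadj with h | h
      · simp only [hg, if_pos (Or.inl h)]
        subst h
        exact hnorm _ _ (hcyc i)
      · simp only [hg, if_pos (Or.inr h)]
        subst h
        exact hnorm _ _ (hcyc j).symm
  · rintro (_ | i)
    · rw [Fintype.sum_option]
      simp only [hg]
      have hval : ∀ i : ZMod k, - f (c i) (w i)
          = f (c i) (c (i - 1)) + f (c i) (c (i + 1)) := by
        intro i
        linear_combination (norm := abel) - hwsum i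
      simp only [hval]
      rw [Finset.sum_add_distrib]
      have hshift : ∑ i : ZMod k, f (c i) (c (i - 1)) = ∑ i : ZMod k, - f (c i) (c (i + 1)) := by
        apply Fintype.sum_equiv (Equiv.subRight (1 : ZMod k))
        intro i
        simp only [Equiv.subRight_apply]
        rw [show i - 1 + 1 = i from by ring, hskew]
      rw [hshift, ← Finset.sum_add_distrib]
      simp
    · rw [Fintype.sum_option]
      have hsplit : ∀ j : ZMod k, g (some i) (some j) =
          (if j = i + 1 then f (c i) (c (i + 1)) else 0) +
          (if j = i - 1 then f (c i) (c (i - 1)) else 0) := by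
        intro j
        simp only [hg]
        by_cases hj1 : j = i + 1
        · subst hj1
          rw [if_pos (Or.inl rfl), if_pos rfl, if_neg (fun h => hmm i h.symm), add_zero]
        · by_cases hj2 : j = i - 1
          · subst hj2
            rw [if_pos (Or.inr (by ring)), if_neg hj1, if_pos rfl, zero_add]
          · rw [if_neg, if_neg hj1, if_neg hj2, add_zero]
            rintro (h | h)
            · exact hj1 h
            · exact hj2 (by linear_combination -h)
      simp only [hsplit]
      rw [Finset.sum_add_distrib, Finset.sum_ite_eq' Finset.univ, Finset.sum_ite_eq' Finset.univ]
      simp only [Finset.mem_univ, if_true]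
      show f (c i) (w i) + (f (c i) (c (i + 1)) + f (c i) (c (i - 1))) = 0
      linear_combination (norm := abel) hwsum i
end
end

section
/- Let n ≥ 3 be odd and let P_n be the prism graph on 2n vertices (two disjoint n-cycles u₁…u_n and v₁…v_n together with spokes u_iv_i). If the wheel graph W_n admits an (r,2)-NZF, then P_n admits an (r,2)-NZF. -/
open scoped BigOperators

noncomputable section

/-- The prism graph `P_n` of order `2n`: two disjoint `n`-cycles
`(false, ·)` and `(true, ·)` joined by the spokes `(false, i)(true, i)`. -/
def prismGraph (n : ℕ) : SimpleGraph (Bool × ZMod n) :=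
  SimpleGraph.fromRel (fun a b =>
    (a.1 = b.1 ∧ b.2 = a.2 + 1) ∨ (a.1 = false ∧ b.1 = true ∧ a.2 = b.2))


/-- Auxiliary: the flow on the prism graph induced by a flow on the wheel graph. -/
def pflow (n : ℕ) (f : Option (ZMod n) → Option (ZMod n) → EuclideanSpace ℝ (Fin 2)) :
    Bool × ZMod n → Bool × ZMod n → EuclideanSpace ℝ (Fin 2)
  | (false, i), (false, j) => if j = i + 1 ∨ i = j + 1 then f (some i) (some j) else 0
  | (true, i), (true, j) => if j = i + 1 ∨ i = j + 1 then -f (some i) (some j) else 0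
  | (false, i), (true, j) => if i = j then f (some i) none else 0
  | (true, i), (false, j) => if i = j then f none (some i) else 0

/-- For odd `n ≥ 3`, if the wheel graph `W_n` admits an `(r,2)`-NZF then so does the
prism graph `P_n`. -/
theorem stmt_7 (n : ℕ) [NeZero n] (hn : 3 ≤ n) (hodd : Odd n) (r : ℝ)
    (h : HasNZF (wheelGraph n) 2 r) : HasNZF (prismGraph n) 2 r := by
  obtain ⟨f, hskew, hzero, hnorm, hkirch⟩ := h
  haveI : Fact (1 < n) := ⟨by omega⟩
  have h1 : (1 : ZMod n) ≠ 0 := one_ne_zero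
  have hne : ∀ i j : ZMod n, j = i + 1 ∨ i = j + 1 → i ≠ j := by
    rintro i j (hc | hc) rfl <;> exact h1 (left_eq_add.mp hc)
  have hW : ∀ i j : ZMod n, (wheelGraph n).Adj (some i) (some j) ↔ (j = i+1 ∨ i = j+1) := by
    intro i j
    simp only [wheelGraph, SimpleGraph.fromRel_adj]
    constructor
    · rintro ⟨-, hc⟩
      rcases hc with hc | hc
      · rcases hc with hc | ⟨k, hk1, hk2⟩
        · exact absurd hc (by simp)
        · injection hk1 with hk1; injection hk2 with hk2
          exact Or.inl (by rw [hk2, hk1])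
      · rcases hc with hc | ⟨k, hk1, hk2⟩
        · exact absurd hc (by simp)
        · injection hk1 with hk1; injection hk2 with hk2
          exact Or.inr (by rw [hk2, hk1])
    · intro hc
      refine ⟨fun hs => hne i j hc (Option.some_injective _ hs), ?_⟩
      rcases hc with hc | hc
      · exact Or.inl (Or.inr ⟨i, rfl, by rw [hc]⟩)
      · exact Or.inr (Or.inr ⟨j, rfl, by rw [hc]⟩)
  have hWhub : ∀ i : ZMod n, (wheelGraph n).Adj (some i) none := by
    intro i
    simp [wheelGraph, SimpleGraph.fromRel_adj]
  have hifeq : ∀ i j : ZMod n,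
      (if j = i + 1 ∨ i = j + 1 then f (some i) (some j) else 0) = f (some i) (some j) := by
    intro i j
    split_ifs with hc
    · rfl
    · exact (hzero _ _ (fun ha => hc ((hW i j).mp ha))).symm
  have hrow : ∀ i : ZMod n, ∑ j : ZMod n, f (some i) (some j) = - f (some i) none := by
    intro i
    have hk := hkirch (some i)
    rw [Fintype.sum_option] at hk
    exact eq_neg_of_add_eq_zero_right hk
  have hPadj : ∀ b c : Bool, ∀ i j : ZMod n, (prismGraph n).Adj (b, i) (c, j) ↔
      ((b = c ∧ (j = i + 1 ∨ i = j + 1)) ∨ (b ≠ c ∧ i = j)) := by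
    intro b c i j
    simp only [prismGraph, SimpleGraph.fromRel_adj, Prod.mk.injEq, ne_eq, not_and]
    constructor
    · rintro ⟨hnij, hrel⟩
      rcases hrel with (⟨hbc, hc⟩ | ⟨hb, hcc, hc⟩) | (⟨hbc, hc⟩ | ⟨hb, hcc, hc⟩)
      · exact Or.inl ⟨hbc, Or.inl hc⟩
      · exact Or.inr ⟨by rw [hb, hcc]; exact Bool.false_ne_true, hc⟩
      · exact Or.inl ⟨hbc.symm, Or.inr hc⟩
      · exact Or.inr ⟨by rw [hb, hcc]; exact Ne.symm Bool.false_ne_true, hc.symm⟩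
    · rintro (⟨rfl, hc⟩ | ⟨hbc, rfl⟩)
      · refine ⟨fun _ => hne i j hc, ?_⟩
        rcases hc with hc | hc
        · exact Or.inl (Or.inl ⟨rfl, hc⟩)
        · exact Or.inr (Or.inl ⟨rfl, hc⟩)
      · refine ⟨fun hb => absurd hb hbc, ?_⟩
        cases b <;> cases c
        · exact absurd rfl hbc
        · exact Or.inl (Or.inr ⟨rfl, rfl, rfl⟩)
        · exact Or.inr (Or.inr ⟨rfl, rfl, rfl⟩)
        · exact absurd rfl hbc
  refine ⟨pflow n f, ?_, ?_, ?_, ?_⟩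
  · -- skew-symmetry
    rintro ⟨b, i⟩ ⟨c, j⟩
    cases b <;> cases c <;> simp only [pflow]
    · by_cases hc : j = i + 1 ∨ i = j + 1
      · rw [if_pos hc, if_pos (Or.symm hc)]; exact hskew _ _
      · rw [if_neg hc, if_neg (fun hd => hc (Or.symm hd)), neg_zero]
    · by_cases hc : i = j
      · subst hc; rw [if_pos rfl, if_pos rfl, hskew (some i) none]
      · rw [if_neg hc, if_neg (Ne.symm hc), neg_zero]
    · by_cases hc : i = j
      · subst hc; rw [if_pos rfl, if_pos rfl, hskew none (some i)]
      · rw [if_neg hc, if_neg (Ne.symm hc), neg_zero]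
    · by_cases hc : j = i + 1 ∨ i = j + 1
      · rw [if_pos hc, if_pos (Or.symm hc), hskew (some i) (some j), neg_neg]
      · rw [if_neg hc, if_neg (fun hd => hc (Or.symm hd)), neg_zero]
  · -- vanishing on non-edges
    rintro ⟨b, i⟩ ⟨c, j⟩ hadj
    rw [hPadj] at hadj
    push_neg at hadj
    cases b <;> cases c <;> simp only [pflow]
    · rw [if_neg (not_or.mpr (hadj.1 rfl))]
    · rw [if_neg (hadj.2 Bool.false_ne_true)]
    · rw [if_neg (hadj.2 (Ne.symm Bool.false_ne_true))]
    · rw [if_neg (not_or.mpr (hadj.1 rfl))]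
  · -- norm bounds
    rintro ⟨b, i⟩ ⟨c, j⟩ hadj
    rw [hPadj] at hadj
    rcases hadj with ⟨hbc, hc⟩ | ⟨hbc, rfl⟩
    · have hb := hnorm _ _ ((hW i j).mpr hc)
      subst hbc
      cases b <;> simp only [pflow, if_pos hc]
      · exact hb
      · rw [norm_neg]; exact hb
    · have hb := hnorm _ _ (hWhub i)
      have hb' : ‖f none (some i)‖ = ‖f (some i) none‖ := by
        rw [hskew none (some i), norm_neg]
      cases b <;> cases c <;> simp only [pflow, eq_self_iff_true, if_true]
      · exact absurd rfl hbc
      · exact hb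
      · rw [hb']; exact hb
      · exact absurd rfl hbc
  · -- Kirchhoff's law
    rintro ⟨b, i⟩
    rw [Fintype.sum_prod_type, Fintype.sum_bool]
    have hs1 : ∀ j : ZMod n, pflow n f (false, i) (false, j) = f (some i) (some j) :=
      fun j => hifeq i j
    have hs2 : ∀ j : ZMod n, pflow n f (true, i) (true, j) = - f (some i) (some j) := by
      intro j
      simp only [pflow]
      split_ifs with hc
      · rfl
      · rw [(hzero _ _ (fun ha => hc ((hW i j).mp ha))), neg_zero]
    cases b
    · rw [Finset.sum_congr rfl (fun j _ => hs1 j), hrow]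
      have : ∑ j : ZMod n, pflow n f (false, i) (true, j) = f (some i) none := by
        simp only [pflow]
        rw [Finset.sum_ite_eq Finset.univ i (fun _ => f (some i) none), if_pos (Finset.mem_univ i)]
      rw [this, add_neg_cancel]
    · rw [Finset.sum_congr rfl (fun j _ => hs2 j), Finset.sum_neg_distrib, hrow, neg_neg]
      have : ∑ j : ZMod n, pflow n f (true, i) (false, j) = f none (some i) := by
        simp only [pflow]
        rw [Finset.sum_ite_eq Finset.univ i (fun _ => f none (some i)), if_pos (Finset.mem_univ i)]
      rw [this, hskew none (some i), add_neg_cancel]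
end
end

section
/- The complete graph K₄ admits a (1+√2, 2)-NZF: an orientation and an assignment φ : E(K₄) → ℝ² satisfying Kirchhoff's law at each vertex with 1 ≤ ‖φ(e)‖ ≤ √2 for all 6 edges. -/
open scoped BigOperators

noncomputable section

lemma neg_vec2 (x y : ℝ) : -vec2 x y = vec2 (-x) (-y) := by
  ext i
  fin_cases i <;> simp [vec2]

lemma vec2_zero : vec2 0 0 = 0 := by
  ext i
  fin_cases i <;> simp [vec2]

lemma sum_vec2 {ι : Type*} (s : Finset ι) (x y : ι → ℝ) :
    ∑ i ∈ s, vec2 (x i) (y i) = vec2 (∑ i ∈ s, x i) (∑ i ∈ s, y i) := by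
  ext j
  fin_cases j <;> simp [vec2]

lemma one_le_norm_vec2_and_le_sqrt_two {x y : ℝ} (hx : x ∈ ({-1, 0, 1} : Set ℝ))
    (hy : y ∈ ({-1, 0, 1} : Set ℝ)) (hxy : x ≠ 0 ∨ y ≠ 0) :
    1 ≤ ‖vec2 x y‖ ∧ ‖vec2 x y‖ ≤ Real.sqrt 2 := by
  rw [norm_vec2]
  rcases hx with rfl | rfl | rfl <;> rcases hy with rfl | rfl | rfl <;> simp_all <;> norm_num

section PermCirculation

variable {V : Type*} [DecidableEq V]

def permCirculation (σ : Equiv.Perm V) (u v : V) : ℝ :=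
  (if σ u = v then 1 else 0) - (if σ v = u then 1 else 0)

variable (σ : Equiv.Perm V)

lemma permCirculation_swap (u v : V) : permCirculation σ u v = -permCirculation σ v u := by
  simp only [permCirculation]
  ring

lemma permCirculation_mem (u v : V) : permCirculation σ u v ∈ ({-1, 0, 1} : Set ℝ) := by
  unfold permCirculation
  split_ifs <;> norm_num

lemma permCirculation_self (u : V) : permCirculation σ u u = 0 :=
  sub_self _

lemma permCirculation_ne_zero {u v : V} (h : Xor (σ u = v) (σ v = u)) :
    permCirculation σ u v ≠ 0 := by
  rcases h with ⟨h₁, h₂⟩ | ⟨h₁, h₂⟩ <;> simp [permCirculation, h₁, h₂]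

lemma permCirculation_eq_zero_of_not_adj {G : SimpleGraph V} (hσ : ∀ u, σ u ≠ u → G.Adj u (σ u))
    {u v : V} (huv : ¬ G.Adj u v) : permCirculation σ u v = 0 := by
  rcases eq_or_ne u v with rfl | hne
  · exact permCirculation_self σ u
  have hu : σ u ≠ v := fun h => huv (h ▸ hσ u (h ▸ hne.symm))
  have hv : σ v ≠ u := fun h => huv (h ▸ (hσ v (h ▸ hne)).symm)
  simp [permCirculation, hu, hv]

/-- Kirchhoff's law: each vertex has exactly one out-neighbour `σ v` and one in-neighbour
`σ⁻¹ v`. -/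
lemma sum_permCirculation [Fintype V] (v : V) : ∑ u, permCirculation σ v u = 0 := by
  simp only [permCirculation, Finset.sum_sub_distrib, Finset.sum_ite_eq, Finset.mem_univ, if_true]
  simp only [← Equiv.eq_symm_apply, Finset.sum_ite_eq', Finset.mem_univ, if_true, sub_self]

end PermCirculation

/-- `Xor` excludes an edge forming a 2-cycle of the permutation: its two traversals cancel. -/
theorem hasNZF_of_perm_pair {V : Type} [Fintype V] [DecidableEq V] (G : SimpleGraph V)
    (σ τ : Equiv.Perm V) (hσ : ∀ u, σ u ≠ u → G.Adj u (σ u))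
    (hτ : ∀ u, τ u ≠ u → G.Adj u (τ u))
    (hcover : ∀ u v, G.Adj u v → Xor (σ u = v) (σ v = u) ∨ Xor (τ u = v) (τ v = u)) :
    HasNZF G 2 (1 + Real.sqrt 2) := by
  refine ⟨fun u v => vec2 (permCirculation σ u v) (permCirculation τ u v), ?_, ?_, ?_, ?_⟩
  · intro u v
    dsimp only
    rw [neg_vec2, permCirculation_swap σ u, permCirculation_swap τ u]
  · intro u v huv
    dsimp only
    rw [permCirculation_eq_zero_of_not_adj σ hσ huv,
      permCirculation_eq_zero_of_not_adj τ hτ huv, vec2_zero]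
  · intro u v huv
    rw [add_sub_cancel_left]
    exact one_le_norm_vec2_and_le_sqrt_two (permCirculation_mem σ u v)
      (permCirculation_mem τ u v) ((hcover u v huv).imp (permCirculation_ne_zero σ)
        (permCirculation_ne_zero τ))
  · intro v
    rw [sum_vec2, sum_permCirculation, sum_permCirculation, vec2_zero]

/-- The complete graph `K₄` admits a `(1+√2, 2)`-NZF. -/
theorem stmt_8 : HasNZF (SimpleGraph.completeGraph (Fin 4)) 2 (1 + Real.sqrt 2) :=
  hasNZF_of_perm_pair _ (finRotate 4) c[0, 2, 1, 3] (fun _ h => h.symm) (fun _ h => h.symm)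
    (by unfold Xor; decide)
end
end

section
/- The complete graph K₄ does not admit an (r,2)-NZF for any r < 1+√2; i.e. φ₂(K₄) = 1+√2. -/
open scoped BigOperators

noncomputable section

/-!
Since `K₄` is planar and self-dual, its flows are the tensions of its dual: a flow is given by four
points `z₀, …, z₃` whose pairwise differences are the six flow values. So an `(r, 2)`-NZF on `K₄`
is the same as four points in the plane with all pairwise distances in `[1, r - 1]`, and the unit
square shows that `r = 1 + √2` is attained.

For weights `y` summing to zero, `‖∑ yᵢ zᵢ‖² = -½ ∑ᵢⱼ yᵢ yⱼ ‖zᵢ - zⱼ‖²`. If the squared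
distances lie in `[1, ρ²]`, comparing them with the midpoint `(1 + ρ²)/2` and applying
Cauchy–Schwarz to `∑ |yᵢ|` bounds this below by `(n - (n - 2) ρ²)/4 · ∑ yᵢ²`. For `n = 4` points and
`ρ < √2` the bound is positive, so the points are affinely independent, which is impossible in the
plane.
-/

open Finset
open scoped RealInnerProductSpace

theorem norm_sq_sum_smul_of_sum_eq_zero {ι E : Type*} [Fintype ι] [NormedAddCommGroup E]
    [InnerProductSpace ℝ E] (y : ι → ℝ) (z : ι → E) (hy : ∑ i, y i = 0) :
    ‖∑ i, y i • z i‖ ^ 2 = -(∑ i, ∑ j, y i * y j * ‖z i - z j‖ ^ 2) / 2 := by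
  calc ‖∑ i, y i • z i‖ ^ 2 = ∑ i, ∑ j, y i * y j * ⟪z i, z j⟫ := by
        simp only [← real_inner_self_eq_norm_sq, sum_inner, inner_sum, real_inner_smul_left,
          real_inner_smul_right]
        rw [sum_comm]
        congr! 2; ring
    _ = ∑ i, ∑ j, (y i * ‖z i‖ ^ 2 * y j + y i * (y j * ‖z j‖ ^ 2)
          - y i * y j * ‖z i - z j‖ ^ 2) / 2 := by
        congr! 2 with i _ j _
        rw [norm_sub_sq_real]; ring
    _ = _ := by
        simp only [← sum_div, sum_sub_distrib, sum_add_distrib, ← mul_sum, ← sum_mul, hy]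
        ring

theorem sum_sum_mul_mul_le_of_sum_eq_zero {ι : Type*} [Fintype ι]
    (y : ι → ℝ) (d : ι → ι → ℝ) {δ : ℝ} (hδ : 1 ≤ δ) (hy : ∑ i, y i = 0)
    (hdiag : ∀ i, d i i = 0) (hd : ∀ i j, i ≠ j → d i j ∈ Set.Icc 1 δ) :
    ∑ i, ∑ j, y i * y j * d i j
      ≤ ((Fintype.card ι - 2) * δ - Fintype.card ι) / 2 * ∑ i, y i ^ 2 := by
  classical
  -- `d i j` lies within `(δ - 1) / 2` of the midpoint `(1 + δ) / 2`; on the diagonal `d i i = 0`.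
  have hterm : ∀ i j, y i * y j * d i j ≤ (1 + δ) / 2 * (y i * y j)
      + (δ - 1) / 2 * (|y i| * |y j|) - if i = j then δ * y i ^ 2 else 0 := by
    intro i j
    by_cases hij : i = j
    · subst hij
      simp only [hdiag, if_true]
      nlinarith [abs_mul_abs_self (y i)]
    · obtain ⟨h1, h2⟩ := hd i j hij
      rw [if_neg hij, sub_zero, ← abs_mul]
      rcases le_total 0 (y i * y j) with h | h
      · rw [abs_of_nonneg h]; nlinarith
      · rw [abs_of_nonpos h]; nlinarith
  have hcs : (∑ i, |y i|) ^ 2 ≤ Fintype.card ι * ∑ i, y i ^ 2 := by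
    have := sq_sum_le_card_mul_sum_sq (s := univ) (f := fun i => |y i|)
    simpa only [sq_abs, card_univ] using this
  calc ∑ i, ∑ j, y i * y j * d i j
      ≤ ∑ i, ∑ j, ((1 + δ) / 2 * (y i * y j) + (δ - 1) / 2 * (|y i| * |y j|)
          - if i = j then δ * y i ^ 2 else 0) := by gcongr with i _ j _; exact hterm i j
    _ = (1 + δ) / 2 * (∑ i, y i) ^ 2 + (δ - 1) / 2 * (∑ i, |y i|) ^ 2
          - δ * ∑ i, y i ^ 2 := by
        simp only [sum_sub_distrib, sum_add_distrib, sum_ite_eq, mem_univ, if_true, ← mul_sum,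
          sq, sum_mul_sum]
    _ ≤ _ := by rw [hy]; nlinarith

theorem mul_sum_sq_le_norm_sq_sum_smul {ι E : Type*} [Fintype ι] [NormedAddCommGroup E]
    [InnerProductSpace ℝ E] {z : ι → E} {ρ : ℝ} (hρ : 1 ≤ ρ)
    (hz : Pairwise fun i j => dist (z i) (z j) ∈ Set.Icc 1 ρ) (y : ι → ℝ) (hy : ∑ i, y i = 0) :
    (Fintype.card ι - (Fintype.card ι - 2) * ρ ^ 2) / 4 * ∑ i, y i ^ 2
      ≤ ‖∑ i, y i • z i‖ ^ 2 := by
  have hd : ∀ i j, i ≠ j → ‖z i - z j‖ ^ 2 ∈ Set.Icc 1 (ρ ^ 2) := by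
    intro i j hij
    obtain ⟨h1, h2⟩ := hz hij
    rw [← dist_eq_norm]
    exact ⟨one_le_pow₀ h1, pow_le_pow_left₀ (by linarith) h2 2⟩
  have := sum_sum_mul_mul_le_of_sum_eq_zero y (fun i j => ‖z i - z j‖ ^ 2)
    (one_le_pow₀ hρ) hy (by simp) hd
  rw [norm_sq_sum_smul_of_sum_eq_zero y z hy]
  linarith

theorem affineIndependent_of_pairwise_dist_mem_Icc {ι E : Type*} [Fintype ι]
    [NormedAddCommGroup E] [InnerProductSpace ℝ E] {z : ι → E} {ρ : ℝ} (hρ : 1 ≤ ρ)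
    (hρn : (Fintype.card ι - 2) * ρ ^ 2 < Fintype.card ι)
    (hz : Pairwise fun i j => dist (z i) (z j) ∈ Set.Icc 1 ρ) :
    AffineIndependent ℝ z := by
  rw [affineIndependent_iff_of_fintype]
  intro y hy hyz
  rw [weightedVSub_eq_weightedVSubOfPoint_of_sum_eq_zero _ _ _ hy 0,
    weightedVSubOfPoint_apply] at hyz
  simp only [vsub_eq_sub, sub_zero] at hyz
  have hle := mul_sum_sq_le_norm_sq_sum_smul hρ hz y hy
  rw [hyz, norm_zero, zero_pow two_ne_zero] at hle
  have hsq : ∑ i, y i ^ 2 = 0 :=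
    le_antisymm (nonpos_of_mul_nonpos_right hle (by linarith)) (by positivity)
  intro i
  exact pow_eq_zero_iff two_ne_zero |>.mp <|
    (sum_eq_zero_iff_of_nonneg fun j _ => sq_nonneg (y j)).mp hsq i (mem_univ i)

theorem not_pairwise_dist_mem_Icc_of_finrank_le_two {E : Type*} [NormedAddCommGroup E]
    [InnerProductSpace ℝ E] [FiniteDimensional ℝ E] (hE : Module.finrank ℝ E ≤ 2)
    {ρ : ℝ} (hρ : ρ < √2) (z : Fin 4 → E) :
    ¬ Pairwise fun i j => dist (z i) (z j) ∈ Set.Icc 1 ρ := by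
  intro hz
  have hρ1 : 1 ≤ ρ := by
    obtain ⟨h1, h2⟩ := hz (show (0 : Fin 4) ≠ 1 by decide)
    exact h1.trans h2
  have hρ2 : ρ ^ 2 < 2 := by
    calc ρ ^ 2 < √2 ^ 2 := by gcongr
      _ = 2 := Real.sq_sqrt zero_le_two
  have hind := affineIndependent_of_pairwise_dist_mem_Icc hρ1 (by simp only [Fintype.card_fin, Nat.cast_ofNat]; linarith) hz
  have hcard := hind.card_le_finrank_succ
  have := Submodule.finrank_le (vectorSpan ℝ (Set.range z))
  simp only [Fintype.card_fin] at hcard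
  omega

namespace K4

/- Label each face of the planar embedding of `K₄` by the vertex it avoids. For `u ≠ v`,
`leftFace u v` is the face on the left of the directed edge `u → v`, namely the `a` for which
`(u, v, a, b)` is an even permutation of `(0, 1, 2, 3)`; the diagonal entries are `u`. -/
def leftFace : Fin 4 → Fin 4 → Fin 4 :=
  ![![0, 2, 3, 1], ![3, 1, 0, 2], ![1, 3, 2, 0], ![2, 0, 1, 3]]

theorem leftFace_ne {u v : Fin 4} (h : u ≠ v) : leftFace u v ≠ leftFace v u := by
  revert u v; decide

theorem exists_leftFace_eq {a b : Fin 4} (h : a ≠ b) :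
    ∃ u v, leftFace u v = a ∧ leftFace v u = b := by
  revert a b; decide

variable {V : Type*} [AddCommGroup V]

def flowOfPoints (z : Fin 4 → V) (u v : Fin 4) : V :=
  z (leftFace u v) - z (leftFace v u)

theorem sum_flowOfPoints (z : Fin 4 → V) (u : Fin 4) : ∑ v, flowOfPoints z u v = 0 := by
  fin_cases u <;>
    simp only [Fin.sum_univ_four, flowOfPoints, leftFace, Fin.isValue, Fin.mk_one, Fin.reduceFinMk,
      Matrix.cons_val', Matrix.cons_val, Matrix.cons_val_zero, Matrix.cons_val_one,
      Matrix.cons_val_fin_one] <;>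
    abel

theorem eq_flowOfPoints {f : Fin 4 → Fin 4 → V} (hskew : ∀ u v, f u v = -f v u)
    (hdiag : ∀ u, f u u = 0) (hsum : ∀ u, ∑ v, f u v = 0) :
    f = flowOfPoints ![f 1 2, f 2 0, f 0 1, 0] := by
  have h0 := hsum 0
  have h1 := hsum 1
  have h2 := hsum 2
  simp only [Fin.sum_univ_four, hdiag, zero_add, add_zero] at h0 h1 h2
  have h03 : f 0 3 = f 2 0 - f 0 1 := by linear_combination (norm := abel) h0 - hskew 0 2
  have h13 : f 1 3 = f 0 1 - f 1 2 := by linear_combination (norm := abel) h1 - hskew 1 0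
  have h23 : f 2 3 = f 1 2 - f 2 0 := by linear_combination (norm := abel) h2 - hskew 2 1
  ext u v
  fin_cases u <;> fin_cases v <;>
    simp [flowOfPoints, leftFace, hdiag, h03, h13, h23, hskew 0 2, hskew 1 0, hskew 2 1,
      hskew 3 0, hskew 3 1, hskew 3 2]

theorem hasNZF_iff {d : ℕ} {r : ℝ} :
    HasNZF (SimpleGraph.completeGraph (Fin 4)) d r ↔
      ∃ z : Fin 4 → EuclideanSpace ℝ (Fin d),
        Pairwise fun i j => dist (z i) (z j) ∈ Set.Icc 1 (r - 1) := by
  constructor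
  · rintro ⟨f, hskew, hzero, hbound, hsum⟩
    have hf := eq_flowOfPoints hskew (fun u => hzero u u (SimpleGraph.irrefl _)) hsum
    refine ⟨![f 1 2, f 2 0, f 0 1, 0], fun i j hij => ?_⟩
    obtain ⟨u, v, rfl, rfl⟩ := exists_leftFace_eq hij
    have huv : u ≠ v := by rintro rfl; exact hij rfl
    rw [dist_eq_norm, ← flowOfPoints, ← hf]
    exact hbound u v huv
  · rintro ⟨z, hz⟩
    refine ⟨flowOfPoints z, fun u v => (neg_sub _ _).symm, fun u v huv => ?_,
      fun u v huv => ?_, sum_flowOfPoints z⟩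
    · rw [SimpleGraph.completeGraph, SimpleGraph.top_adj, not_not] at huv
      rw [huv, flowOfPoints, sub_self]
    · rw [flowOfPoints, ← dist_eq_norm]
      exact hz (leftFace_ne huv)

end K4

theorem dist_vec2 (a b c d : ℝ) : dist (vec2 a b) (vec2 c d) = √((a - c) ^ 2 + (b - d) ^ 2) := by
  simp [vec2, EuclideanSpace.dist_eq, Fin.sum_univ_two, Real.dist_eq, sq_abs]

def unitSquare : Fin 4 → EuclideanSpace ℝ (Fin 2) := ![vec2 0 0, vec2 1 0, vec2 1 1, vec2 0 1]

theorem pairwise_dist_unitSquare :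
    Pairwise fun i j => dist (unitSquare i) (unitSquare j) ∈ Set.Icc 1 √2 := by
  intro i j hij
  fin_cases i <;> fin_cases j <;> first | exact absurd rfl hij | norm_num [unitSquare, dist_vec2]

/-- `K₄` admits no `(r,2)`-NZF for `r < 1 + √2`, while it does admit a `(1+√2, 2)`-NZF;
i.e. `φ₂(K₄) = 1 + √2`. -/
theorem stmt_9 :
    (∀ r : ℝ, r < 1 + Real.sqrt 2 → ¬ HasNZF (SimpleGraph.completeGraph (Fin 4)) 2 r) ∧
    HasNZF (SimpleGraph.completeGraph (Fin 4)) 2 (1 + Real.sqrt 2) := by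
  refine ⟨fun r hr hflow => ?_, K4.hasNZF_iff.mpr ⟨unitSquare, ?_⟩⟩
  · obtain ⟨z, hz⟩ := K4.hasNZF_iff.mp hflow
    exact not_pairwise_dist_mem_Icc_of_finrank_le_two finrank_euclideanSpace_fin.le
      (by linarith) z hz
  · simpa using pairwise_dist_unitSquare
end
end

section
/- A cubic graph G admits a (2,2)-NZF (i.e. a 2-dimensional flow all of whose values are unit vectors in ℝ²) if and only if G is bipartite. -/
open scoped BigOperators

noncomputable section

/-!
At a vertex of a `(2,2)`-flow the three outgoing values are unit vectors summing to zero, so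
they are pairwise at angle `2π/3`: read in `ℂ`, they have a common cube `s v`. By skew-symmetry
(and since `3` is odd) `s` changes sign along every edge, so the sign of `s v` in the
lexicographic order on `ℝ × ℝ` is a proper 2-colouring.

Conversely, a regular bipartite graph is a union of perfect matchings (König: Hall's condition
holds by double counting, then induct on the degree). Sending `ω ^ i`, `ω` a primitive cube root
of unity, along each edge of the `i`-th matching from one colour class to the other is a flow,
because `1 + ω + ω ^ 2 = 0`.
-/

open Finset

theorem Complex.pow_three_eq_of_add_add_eq_zero {x y z : ℂ} (hx : ‖x‖ = 1) (hy : ‖y‖ = 1)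
    (hz : ‖z‖ = 1) (h : x + y + z = 0) : x ^ 3 = y ^ 3 := by
  have mul_conj_eq_one : ∀ w : ℂ, ‖w‖ = 1 → w * starRingEnd ℂ w = 1 := fun w hw => by
    rw [Complex.mul_conj, Complex.normSq_eq_norm_sq, hw]; norm_num
  have hp := mul_conj_eq_one x hx
  have hq := mul_conj_eq_one y hy
  have hr := mul_conj_eq_one z hz
  rw [show z = -(x + y) by linear_combination h, map_neg, map_add] at hr
  -- with `a = x * conj y`: `a + conj a = -1` and `a * conj a = 1` force `a ^ 2 + a + 1 = 0`
  linear_combination (x - y) * (-(x * y) - y ^ 2) * hp - (x - y) * x * (x + y) * hq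
    + (x - y) * x * y * hr

theorem Complex.pow_three_eq_of_sum_eq_zero {ι : Type*} [DecidableEq ι] {s : Finset ι} (hs : #s = 3)
    {g : ι → ℂ} (hg : ∀ i ∈ s, ‖g i‖ = 1) (hsum : ∑ i ∈ s, g i = 0) {i j : ι} (hi : i ∈ s)
    (hj : j ∈ s) : g i ^ 3 = g j ^ 3 := by
  obtain rfl | hij := eq_or_ne i j
  · rfl
  have hj' : j ∈ s.erase i := mem_erase.mpr ⟨hij.symm, hj⟩
  obtain ⟨t, ht⟩ := card_eq_one.mp (by
    rw [card_erase_of_mem hj', card_erase_of_mem hi, hs] : #((s.erase i).erase j) = 1)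
  have hts : t ∈ s := mem_of_mem_erase (mem_of_mem_erase (ht ▸ mem_singleton_self t))
  rw [← add_sum_erase s g hi, ← add_sum_erase _ g hj', ht, sum_singleton, ← add_assoc] at hsum
  exact pow_three_eq_of_add_add_eq_zero (hg i hi) (hg j hj) (hg t hts) hsum

namespace SimpleGraph

variable {V : Type*} {G : SimpleGraph V}

theorem colorable_two_of_forall_adj_eq_neg {α : Type*} [AddCommGroup α] [LinearOrder α]
    [IsOrderedAddMonoid α] (s : V → α) (hs : ∀ v, s v ≠ 0)
    (h : ∀ u v, G.Adj u v → s u = -s v) : G.Colorable 2 := by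
  let C : G.Coloring Bool := Coloring.mk (fun v => decide (0 < s v)) fun {u v} huv => by
    rw [h u v huv, ne_eq, decide_eq_decide, neg_pos]
    intro hiff
    rcases (hs v).lt_or_gt with hneg | hpos
    exacts [(hiff.1 hneg).not_gt hneg, (hiff.2 hpos).not_gt hpos]
  simpa using C.colorable

theorem Colorable.exists_abs_eq_one_forall_adj_eq_neg (hC : G.Colorable 2) :
    ∃ ε : V → ℝ, (∀ v, |ε v| = 1) ∧ ∀ u v, G.Adj u v → ε u = -ε v := by
  obtain ⟨C⟩ := hC
  refine ⟨fun v => (-1) ^ (C v : ℕ), fun v => by simp, fun u v huv => ?_⟩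
  have := C.valid huv
  show (-1 : ℝ) ^ (C u : ℕ) = -(-1) ^ (C v : ℕ)
  generalize C u = a, C v = b at this ⊢
  fin_cases a <;> fin_cases b <;> simp_all

/-- The matchings `m i` are encoded as involutions pairing each vertex with its partner;
every edge lies in exactly one of them. -/
structure IsOneFactorization {ι : Type*} (G : SimpleGraph V) (m : ι → V → V) : Prop where
  adj : ∀ i v, G.Adj v (m i v)
  involutive : ∀ i, Function.Involutive (m i)
  existsUnique : ∀ u v, G.Adj u v → ∃! i, m i u = v

theorem deleteEdges_range_adj {m : V → V} (hm : Function.Involutive m) {u w : V} :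
    (G.deleteEdges (Set.range fun v => s(v, m v))).Adj u w ↔ G.Adj u w ∧ m u ≠ w := by
  suffices s(u, w) ∈ Set.range (fun v => s(v, m v)) ↔ m u = w by simp only [deleteEdges_adj, this]
  refine ⟨fun ⟨v, hv⟩ => ?_, fun h => ⟨u, h ▸ rfl⟩⟩
  rcases Sym2.eq_iff.1 hv with ⟨rfl, rfl⟩ | ⟨rfl, rfl⟩
  exacts [rfl, hm v]

section Finite

variable [Fintype V] [DecidableRel G.Adj] {k : ℕ}

theorem IsRegularOfDegree.card_le_card_biUnion_neighborFinset [DecidableEq V]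
    (hG : G.IsRegularOfDegree k) (hk : 0 < k) (s : Finset V) :
    #s ≤ #(s.biUnion fun v => G.neighborFinset v) := by
  refine Nat.le_of_mul_le_mul_right (card_mul_le_card_mul G.Adj (fun a ha => ?_) fun b _ => ?_) hk
  · rw [← hG a, ← card_neighborFinset_eq_degree]
    exact card_le_card fun b hb => (mem_bipartiteAbove G.Adj).2
      ⟨mem_biUnion.2 ⟨a, ha, hb⟩, (G.mem_neighborFinset a b).1 hb⟩
  · rw [← hG b, ← card_neighborFinset_eq_degree]
    exact card_le_card fun a ha =>
      (G.mem_neighborFinset b a).2 ((mem_bipartiteBelow G.Adj).1 ha).2.symm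

theorem IsRegularOfDegree.exists_perm_forall_adj (hG : G.IsRegularOfDegree k) (hk : 0 < k) :
    ∃ σ : Equiv.Perm V, ∀ v, G.Adj v (σ v) := by
  classical
  obtain ⟨σ, hσ, hadj⟩ := (all_card_le_biUnion_card_iff_exists_injective _).1
    (hG.card_le_card_biUnion_neighborFinset hk)
  exact ⟨Equiv.ofBijective σ (Finite.injective_iff_bijective.1 hσ),
    fun v => (G.mem_neighborFinset v _).1 (hadj v)⟩

/-- The colouring turns a permutation along edges into an involution. -/
theorem IsRegularOfDegree.exists_involutive_forall_adj (hC : G.Colorable 2)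
    (hG : G.IsRegularOfDegree k) (hk : 0 < k) :
    ∃ m : V → V, Function.Involutive m ∧ ∀ v, G.Adj v (m v) := by
  obtain ⟨C⟩ := hC
  obtain ⟨σ, hσ⟩ := hG.exists_perm_forall_adj hk
  have hσsymm : ∀ v, G.Adj v (σ.symm v) := fun v => by
    simpa using (hσ (σ.symm v)).symm
  have hcol : ∀ v, C v ≠ 0 → C (σ.symm v) = 0 := fun v hv => by
    have := C.valid (hσsymm v)
    omega
  refine ⟨fun v => if C v = 0 then σ v else σ.symm v, fun v => ?_, fun v => ?_⟩
  · by_cases hv : C v = 0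
    · have : C (σ v) ≠ 0 := hv ▸ (C.valid (hσ v)).symm
      simp [hv, this]
    · simp [hv, hcol v hv]
  · dsimp only
    split_ifs
    exacts [hσ v, hσsymm v]

theorem IsRegularOfDegree.deleteEdges_range {m : V → V} (hG : G.IsRegularOfDegree (k + 1))
    (hm : Function.Involutive m) (hadj : ∀ v, G.Adj v (m v))
    [DecidableRel (G.deleteEdges (Set.range fun v => s(v, m v))).Adj] :
    (G.deleteEdges (Set.range fun v => s(v, m v))).IsRegularOfDegree k := by
  classical
  intro v
  have : (G.deleteEdges (Set.range fun v => s(v, m v))).neighborFinset v =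
      (G.neighborFinset v).erase (m v) := by
    ext w
    rw [mem_neighborFinset, deleteEdges_range_adj hm, mem_erase, mem_neighborFinset, and_comm,
      ne_comm]
  rw [← card_neighborFinset_eq_degree, this,
    card_erase_of_mem ((G.mem_neighborFinset v _).2 (hadj v)), card_neighborFinset_eq_degree, hG v]
  rfl

theorem IsRegularOfDegree.exists_isOneFactorization (hC : G.Colorable 2)
    (hG : G.IsRegularOfDegree k) : ∃ m : Fin k → V → V, G.IsOneFactorization m := by
  induction k generalizing G with
  | zero =>
    refine ⟨Fin.elim0, ⟨fun i => i.elim0, fun i => i.elim0, fun u v huv => ?_⟩⟩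
    have : G.neighborFinset u = ∅ := by rw [← card_eq_zero, card_neighborFinset_eq_degree, hG u]
    simpa [this] using (G.mem_neighborFinset u v).2 huv
  | succ k ih =>
    classical
    obtain ⟨m₀, hinv, hadj⟩ := hG.exists_involutive_forall_adj hC k.succ_pos
    obtain ⟨m, hm⟩ := ih (hC.mono_left (deleteEdges_le _)) (hG.deleteEdges_range hinv hadj)
    have hm_adj i v := (deleteEdges_range_adj hinv).1 (hm.adj i v)
    refine ⟨Fin.cons m₀ m, ⟨Fin.cases hadj fun i v => (hm_adj i v).1,
      Fin.cases hinv hm.involutive, fun u v huv => ?_⟩⟩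
    by_cases h : m₀ u = v
    · refine ⟨0, h, fun i hi => ?_⟩
      cases i using Fin.cases with
      | zero => rfl
      | succ i => exact absurd (h.trans hi.symm) (hm_adj i u).2
    · obtain ⟨j, hj, huniq⟩ := hm.existsUnique u v ((deleteEdges_range_adj hinv).2 ⟨huv, h⟩)
      refine ⟨j.succ, hj, fun i hi => ?_⟩
      cases i using Fin.cases with
      | zero => exact absurd hi h
      | succ i => exact congrArg Fin.succ (huniq i hi)

end Finite

end SimpleGraph

theorem exists_sum_eq_zero_forall_norm_eq_one {k : ℕ} (hk : 2 ≤ k) :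
    ∃ e : Fin k → EuclideanSpace ℝ (Fin 2), ∑ i, e i = 0 ∧ ∀ i, ‖e i‖ = 1 := by
  have hζ := Complex.isPrimitiveRoot_exp k (by omega)
  refine ⟨fun i => Complex.orthonormalBasisOneI.repr
    (Complex.exp (2 * Real.pi * Complex.I / k) ^ (i : ℕ)), ?_, fun i => ?_⟩
  · rw [← map_sum, Fin.sum_univ_eq_sum_range (fun i => Complex.exp _ ^ i), hζ.geom_sum_eq_zero hk,
      map_zero]
  · rw [LinearIsometryEquiv.norm_map, norm_pow, hζ.norm'_eq_one (by omega), one_pow]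

theorem IsNZF.exists_forall_adj_eq_neg {V : Type} [Fintype V] {G : SimpleGraph V}
    [DecidableRel G.Adj] (hG : G.IsRegularOfDegree 3) {f : V → V → EuclideanSpace ℝ (Fin 2)}
    (hf : IsNZF G 2 2 f) : ∃ s : V → ℂ, (∀ v, s v ≠ 0) ∧ ∀ u v, G.Adj u v → s u = -s v := by
  classical
  obtain ⟨hskew, hsupp, hnorm, hkirch⟩ := hf
  let g u v : ℂ := Complex.orthonormalBasisOneI.repr.symm (f u v)
  have hg : ∀ u v, G.Adj u v → ‖g u v‖ = 1 := fun u v huv => by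
    have := hnorm u v huv
    simp only [g, LinearIsometryEquiv.norm_map]
    linarith
  have hcube : ∀ v u w, G.Adj v u → G.Adj v w → g v u ^ 3 = g v w ^ 3 := by
    intro v u w hu hw
    have hsum : ∑ x ∈ G.neighborFinset v, g v x = 0 := by
      rw [sum_subset (subset_univ _) fun x _ hx => by simp [g, hsupp v x (by simpa using hx)],
        ← map_sum, hkirch v, map_zero]
    exact Complex.pow_three_eq_of_sum_eq_zero (G.card_neighborFinset_eq_degree v ▸ hG v)
      (fun x hx => hg v x ((G.mem_neighborFinset v x).1 hx)) hsum (by simpa) (by simpa)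
  choose nbr hnbr using fun v => G.degree_pos_iff_exists_adj v |>.1 (by rw [hG v]; norm_num)
  refine ⟨fun v => g v (nbr v) ^ 3, fun v => pow_ne_zero 3 ?_, fun u v huv => ?_⟩
  · exact norm_ne_zero_iff.1 (by rw [hg v _ (hnbr v)]; norm_num)
  · show g u (nbr u) ^ 3 = -(g v (nbr v) ^ 3)
    rw [hcube u _ v (hnbr u) huv, hcube v _ u (hnbr v) huv.symm]
    simp only [g, hskew u v, map_neg]
    exact Odd.neg_pow (by decide) _

theorem SimpleGraph.IsOneFactorization.isNZF {V : Type} {ι : Type*} [Fintype V] [DecidableEq V]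
    [Fintype ι] {G : SimpleGraph V} {m : ι → V → V} (hm : G.IsOneFactorization m) {ε : V → ℝ}
    (hε : ∀ v, |ε v| = 1) (hεadj : ∀ u v, G.Adj u v → ε u = -ε v) {d : ℕ} {r : ℝ}
    {e : ι → EuclideanSpace ℝ (Fin d)} (he : ∑ i, e i = 0)
    (hnorm : ∀ i, 1 ≤ ‖e i‖ ∧ ‖e i‖ ≤ r - 1) :
    IsNZF G d r fun u v => ∑ i, if m i u = v then ε u • e i else 0 := by
  refine ⟨fun u v => ?_, fun u v huv => ?_, fun u v huv => ?_, fun u => ?_⟩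
  · rw [← sum_neg_distrib]
    refine sum_congr rfl fun i _ => ?_
    by_cases h : m i u = v
    · have hv : m i v = u := h ▸ hm.involutive i u
      rw [if_pos h, if_pos hv, hεadj u v (h ▸ hm.adj i u), neg_smul]
    · have hv : m i v ≠ u := fun hv => h (hv ▸ hm.involutive i v)
      rw [if_neg h, if_neg hv, neg_zero]
  · exact sum_eq_zero fun i _ => if_neg fun h : m i u = v => huv (h ▸ hm.adj i u)
  · obtain ⟨i, hi, huniq⟩ := hm.existsUnique u v huv
    dsimp only
    rw [sum_eq_single i (fun j _ hj => if_neg fun h => hj (huniq j h))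
      fun h => absurd (mem_univ i) h, if_pos hi, norm_smul, Real.norm_eq_abs, hε u, one_mul]
    exact hnorm i
  · rw [sum_comm]
    simp only [sum_ite_eq, mem_univ, if_true]
    rw [← smul_sum, he, smul_zero]

theorem SimpleGraph.IsRegularOfDegree.hasNZF {V : Type} [Fintype V] {G : SimpleGraph V}
    [DecidableRel G.Adj] {k : ℕ} (hG : G.IsRegularOfDegree k) (hk : 2 ≤ k)
    (hC : G.Colorable 2) : HasNZF G 2 2 := by
  classical
  obtain ⟨m, hm⟩ := hG.exists_isOneFactorization hC
  obtain ⟨ε, hε, hεadj⟩ := hC.exists_abs_eq_one_forall_adj_eq_neg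
  obtain ⟨e, he, hnorm⟩ := exists_sum_eq_zero_forall_norm_eq_one hk
  exact ⟨_, hm.isNZF hε hεadj he fun i => by norm_num [hnorm i]⟩

/-- A cubic graph admits a `(2,2)`-NZF (a 2-dimensional flow all of whose values are unit
vectors of `ℝ²`) if and only if it is bipartite (i.e. 2-colourable). -/
theorem stmt_11 {V : Type} [Fintype V] (G : SimpleGraph V) [DecidableRel G.Adj]
    (hcubic : ∀ v, G.degree v = 3) :
    HasNZF G 2 2 ↔ G.Colorable 2 := by
  refine ⟨fun ⟨f, hf⟩ => ?_, SimpleGraph.IsRegularOfDegree.hasNZF hcubic (by norm_num)⟩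
  obtain ⟨s, hs, hadj⟩ := hf.exists_forall_adj_eq_neg hcubic
  exact G.colorable_two_of_forall_adj_eq_neg (fun v => toLex ((s v).re, (s v).im))
    (fun v => by simpa [Complex.ext_iff] using hs v) (fun u v huv => by rw [hadj u v huv]; rfl)
end
end

section
/- If every bridgeless cubic graph admits an (r,d)-NZF, then every bridgeless graph admits an (r,d)-NZF (for fixed d ≥ 1 and real r ≥ 2). -/
open scoped BigOperators

noncomputable section

/-!
Replace every vertex `v` of `H` by a ring of triangles, one triangle for each dart at `v`, taken in
the cyclic order of a rotation system, and let each edge of `H` join the two triangles of its darts.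
The resulting graph is cubic as soon as no vertex has degree one, which bridgelessness guarantees.
It is again bridgeless: an edge inside a ring lies on a triangle or on the ring itself, and an edge
of `H` lies on a cycle of `H`, which lifts through the rings. Contracting each ring to its vertex
turns a flow on the cubic graph into one on `H`, since two rings are joined exactly by the edge of
`H` between their vertices and Kirchhoff's law at `v` is the sum of Kirchhoff's laws on its ring.
-/

open Equiv Function

namespace SimpleGraph

section deleteEdges

variable {V : Type*} {G : SimpleGraph V} {e : Sym2 V} {a b c : V}

lemma Adj.deleteEdges_of_notMem (h : G.Adj a b) (ha : a ∉ e) : (G.deleteEdges {e}).Adj a b :=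
  (deleteEdges_adj ..).2 ⟨h, fun he => ha (Set.mem_singleton_iff.1 he ▸ Sym2.mem_mk_left a b)⟩

lemma reachable_deleteEdges_of_adj_of_adj (hac : G.Adj a c) (hcb : G.Adj c b)
    (hc : c ∉ s(a, b)) : (G.deleteEdges {s(a, b)}).Reachable a b :=
  (hac.symm.deleteEdges_of_notMem hc).symm.reachable.trans (hcb.deleteEdges_of_notMem hc).reachable

lemma reachable_of_iterate_eq {α : Type*} (F : α → V) (g : α → α) {b : α}
    (hstep : ∀ a ≠ b, G.Reachable (F a) (F (g a))) :
    ∀ (n : ℕ) (a : α), g^[n] a = b → G.Reachable (F a) (F b)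
  | 0, _, rfl => .rfl
  | n + 1, a, h => by
    by_cases hab : a = b
    · rw [hab]
    · exact (hstep a hab).trans (reachable_of_iterate_eq F g hstep n (g a) h)

end deleteEdges

def ofPerms {V : Type*} (σ μ : Perm V) : SimpleGraph V :=
  fromRel fun x y => y = σ x ∨ y = μ x

section ofPerms

variable {V : Type*} {σ μ : Perm V} {x y : V}

lemma ofPerms_adj_iff (hμ : Involutive μ) :
    (ofPerms σ μ).Adj x y ↔ x ≠ y ∧ (y = σ x ∨ y = σ.symm x ∨ y = μ x) := by
  rw [ofPerms, fromRel_adj, eq_comm (a := x), ← σ.eq_symm_apply, eq_comm (a := x), hμ.eq_iff]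
  tauto

lemma isRegularOfDegree_ofPerms [(ofPerms σ μ).LocallyFinite]
    (hμ : Involutive μ) (hnodup : ∀ x, [x, σ x, σ.symm x, μ x].Nodup) :
    (ofPerms σ μ).IsRegularOfDegree 3 := by
  classical
  intro x
  have hx := hnodup x
  simp only [List.nodup_cons, List.mem_cons, List.not_mem_nil, or_false, not_or,
    List.nodup_nil, and_true, not_false_eq_true] at hx
  obtain ⟨⟨h1, h2, h3⟩, ⟨h4, h5⟩, h6⟩ := hx
  have : (ofPerms σ μ).neighborFinset x = {σ x, σ.symm x, μ x} := by
    ext y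
    rw [mem_neighborFinset, ofPerms_adj_iff hμ]
    simp only [Finset.mem_insert, Finset.mem_singleton]
    constructor
    · exact fun h => h.2
    · rintro (rfl | rfl | rfl) <;> simp_all [Ne.symm]
  rw [← card_neighborFinset_eq_degree, this, Finset.card_eq_three]
  exact ⟨_, _, _, h4, h5, h6, rfl⟩

end ofPerms

lemma bridgeless_ofPerms {V : Type} {σ μ : Perm V}
    (hσ : ∀ x, ((ofPerms σ μ).deleteEdges {s(x, σ x)}).Reachable x (σ x))
    (hμ : ∀ x, ((ofPerms σ μ).deleteEdges {s(x, μ x)}).Reachable x (μ x)) :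
    Bridgeless (ofPerms σ μ) := by
  intro e he
  induction e using Sym2.ind with | h x y => ?_
  rw [isBridge_iff, not_not]
  obtain ⟨-, (rfl | rfl) | rfl | rfl⟩ := (fromRel_adj _ x y).1 (mem_edgeSet _ |>.1 he)
  · exact hσ x
  · exact hμ x
  · rw [Sym2.eq_swap]; exact (hσ y).symm
  · rw [Sym2.eq_swap]; exact (hμ y).symm

end SimpleGraph

open Finset in
theorem HasNZF.of_contraction {V W : Type} [Fintype V] [Fintype W] {G : SimpleGraph V}
    {H : SimpleGraph W} {d : ℕ} {r : ℝ} (π : V → W)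
    (hcross : ∀ x y, G.Adj x y → π x ≠ π y → H.Adj (π x) (π y))
    (hlift : ∀ u v, H.Adj u v → ∃ x y, π x = u ∧ π y = v ∧ G.Adj x y)
    (huniq : ∀ x y x' y', G.Adj x y → G.Adj x' y' → π x ≠ π y → π x' = π x → π y' = π y →
      x' = x ∧ y' = y)
    (hG : HasNZF G d r) : HasNZF H d r := by
  classical
  obtain ⟨g, hskew, hsupp, hnorm, hkirch⟩ := hG
  set f : W → W → EuclideanSpace ℝ (Fin d) :=
    fun u v => ∑ x with π x = u, ∑ y with π y = v, g x y
  have hf_skew : ∀ u v, f u v = -f v u := by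
    intro u v
    dsimp only [f]
    rw [sum_comm, ← sum_neg_distrib]
    refine sum_congr rfl fun y _ => ?_
    rw [← sum_neg_distrib]
    exact sum_congr rfl fun x _ => hskew x y
  have hf_edge : ∀ x₀ y₀, G.Adj x₀ y₀ → π x₀ ≠ π y₀ → f (π x₀) (π y₀) = g x₀ y₀ := by
    intro x₀ y₀ hadj hne
    have hzero : ∀ x y, π x = π x₀ → π y = π y₀ → (x, y) ≠ (x₀, y₀) → g x y = 0 :=
      fun x y hx hy hxy => hsupp x y fun h => hxy <| by
        obtain ⟨rfl, rfl⟩ := huniq x₀ y₀ x y hadj h hne hx hy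
        rfl
    dsimp only [f]
    rw [sum_eq_single_of_mem x₀ (by simp), sum_eq_single_of_mem y₀ (by simp)]
    · exact fun y hy hy₀ => hzero _ _ rfl (by simpa using hy) (by simp [hy₀])
    · exact fun x hx hx₀ => sum_eq_zero fun y hy =>
        hzero _ _ (by simpa using hx) (by simpa using hy) (by simp [hx₀])
  refine ⟨f, hf_skew, fun u v huv => ?_, fun u v huv => ?_, fun u => ?_⟩
  · by_cases h : u = v
    · subst h
      have h2 : (2 : ℝ) • f u u = 0 := by
        rw [two_smul]; nth_rewrite 2 [hf_skew u u]; exact add_neg_cancel _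
      exact (smul_eq_zero.1 h2).resolve_left two_ne_zero
    · refine sum_eq_zero fun x hx => sum_eq_zero fun y hy => hsupp x y fun hadj => huv ?_
      simp only [mem_filter, mem_univ, true_and] at hx hy
      subst hx hy
      exact hcross x y hadj h
  · obtain ⟨x, y, rfl, rfl, hadj⟩ := hlift u v huv
    rw [hf_edge x y hadj huv.ne]
    exact hnorm x y hadj
  · dsimp only [f]
    rw [sum_comm]
    exact sum_eq_zero fun x _ => (sum_fiberwise univ π (g x)).trans (hkirch x)

open SimpleGraph in
lemma Bridgeless.exists_dart_ne {W : Type} {H : SimpleGraph W} (hB : Bridgeless H)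
    (d : H.Dart) : ∃ e : H.Dart, e.fst = d.fst ∧ e ≠ d := by
  by_contra! hd
  obtain ⟨⟨v, w⟩, hvw⟩ := d
  refine hB s(v, w) hvw (isBridge_iff_forall_walk_mem_edges.2 fun p => ?_)
  cases p with
  | nil => exact absurd hvw (H.loopless.irrefl v)
  | cons hvx _ =>
    obtain rfl : _ = w := congrArg (·.snd) (hd ⟨(v, _), hvx⟩ rfl)
    exact List.mem_cons_self ..

namespace SimpleGraph

structure RotationSystem {W : Type*} (H : SimpleGraph W) where
  rot : Perm H.Dart
  fst_rot : ∀ d, (rot d).fst = d.fst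
  exists_iterate_eq : ∀ a b : H.Dart, a.fst = b.fst → ∃ n, rot^[n] a = b

theorem nonempty_rotationSystem {W : Type*} [Finite W] (H : SimpleGraph W) :
    Nonempty H.RotationSystem := by
  choose τ hτ using fun v => (Set.toFinite (H.neighborSet v)).countable.exists_cycleOn
  let rot : Perm H.Dart :=
    { toFun d := ⟨(d.fst, τ d.fst d.snd), (hτ d.fst).1.apply_mem_iff.2 d.adj⟩
      invFun d := ⟨(d.fst, (τ d.fst)⁻¹ d.snd), (hτ d.fst).1.inv.apply_mem_iff.2 d.adj⟩
      left_inv d := by ext <;> simp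
      right_inv d := by ext <;> simp }
  have hiter : ∀ n d, (rot^[n] d).toProd = (d.fst, (τ d.fst ^ n) d.snd) := by
    intro n d
    induction n with
    | zero => rfl
    | succ n ih =>
      rw [iterate_succ_apply', pow_succ', Perm.mul_apply]
      show ((rot^[n] d).fst, τ (rot^[n] d).fst (rot^[n] d).snd) = _
      rw [ih]
  refine ⟨⟨rot, fun d => rfl, fun a b hab => ?_⟩⟩
  obtain ⟨n, hn⟩ := (hτ a.fst).1.exists_pow_eq' (Set.toFinite _) a.adj (hab ▸ b.adj)
  exact ⟨n, Dart.ext _ _ ((hiter n a).trans (Prod.ext hab hn))⟩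

namespace RotationSystem

variable {W : Type} {H : SimpleGraph W} (ρ : H.RotationSystem)

lemma fst_rot_symm (d : H.Dart) : (ρ.rot.symm d).fst = d.fst := by
  simpa using (ρ.fst_rot (ρ.rot.symm d)).symm

lemma rot_ne_self (hB : Bridgeless H) (d : H.Dart) : ρ.rot d ≠ d := by
  obtain ⟨e, he, hne⟩ := hB.exists_dart_ne d
  obtain ⟨n, hn⟩ := ρ.exists_iterate_eq d e he.symm
  exact fun hfix => hne (hn.symm.trans (iterate_fixed hfix n))

/- The ring of `v` has the vertices `(d, i)` with `d.fst = v`. `cycleSucc` runs around it and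
`partner` supplies the third edge at each vertex: the triangle of `d` is `(d, 0)`, `(d, 1)`,
`(ρ⁻¹ d, 2)`, consecutive triangles are joined by `(d, 1)(d, 2)`, and `(d, 0)(d.symm, 0)` is the
edge of `H` carried by `d`. -/
def cycleSucc : Perm (H.Dart × Fin 3) where
  toFun
    | (d, 0) => (d, 1)
    | (d, 1) => (d, 2)
    | (d, 2) => (ρ.rot d, 0)
  invFun
    | (d, 0) => (ρ.rot.symm d, 2)
    | (d, 1) => (d, 0)
    | (d, 2) => (d, 1)
  left_inv := by rintro ⟨d, i⟩; fin_cases i <;> simp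
  right_inv := by rintro ⟨d, i⟩; fin_cases i <;> simp

def partner : H.Dart × Fin 3 → H.Dart × Fin 3
  | (d, 0) => (d.symm, 0)
  | (d, 1) => (ρ.rot.symm d, 2)
  | (d, 2) => (ρ.rot d, 1)

lemma partner_involutive : Involutive ρ.partner := by
  rintro ⟨d, i⟩; fin_cases i <;> simp [partner]

abbrev cubicExpansion : SimpleGraph (H.Dart × Fin 3) :=
  ofPerms ρ.cycleSucc (ρ.partner_involutive.toPerm _)

lemma cubicExpansion_adj_iff {x y : H.Dart × Fin 3} :
    ρ.cubicExpansion.Adj x y ↔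
      x ≠ y ∧ (y = ρ.cycleSucc x ∨ y = ρ.cycleSucc.symm x ∨ y = ρ.partner x) :=
  ofPerms_adj_iff ρ.partner_involutive

lemma isRegularOfDegree_cubicExpansion [ρ.cubicExpansion.LocallyFinite]
    (hB : Bridgeless H) : ρ.cubicExpansion.IsRegularOfDegree 3 := by
  refine isRegularOfDegree_ofPerms ρ.partner_involutive fun ⟨d, i⟩ => ?_
  have hd := ρ.rot_ne_self hB d
  fin_cases i <;>
    simp [cycleSucc, partner, hd, Ne.symm hd, (Dart.symm_ne d).symm, Equiv.eq_symm_apply]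

lemma reachable_rot {e : Sym2 (H.Dart × Fin 3)} {d : H.Dart} (h₁ : (d, 1) ∉ e)
    (h₂ : (d, 2) ∉ e) : (ρ.cubicExpansion.deleteEdges {e}).Reachable (d, 0) (ρ.rot d, 0) := by
  have hadj₀ : ρ.cubicExpansion.Adj (d, 1) (d, 0) := by simp [cubicExpansion_adj_iff, cycleSucc]
  have hadj₁ : ρ.cubicExpansion.Adj (d, 1) (d, 2) := by simp [cubicExpansion_adj_iff, cycleSucc]
  have hadj₂ : ρ.cubicExpansion.Adj (d, 2) (ρ.rot d, 0) := by
    simp [cubicExpansion_adj_iff, cycleSucc]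
  exact (hadj₀.deleteEdges_of_notMem h₁).symm.reachable.trans <|
    (hadj₁.deleteEdges_of_notMem h₁).reachable.trans (hadj₂.deleteEdges_of_notMem h₂).reachable

lemma reachable_of_fst_eq {e : Sym2 (H.Dart × Fin 3)} {a b : H.Dart} (hab : a.fst = b.fst)
    (he : ∀ d ≠ b, (d, 1) ∉ e ∧ (d, 2) ∉ e) :
    (ρ.cubicExpansion.deleteEdges {e}).Reachable (a, 0) (b, 0) :=
  have ⟨n, hn⟩ := ρ.exists_iterate_eq a b hab
  reachable_of_iterate_eq (·, 0) ρ.rot (fun d hd => ρ.reachable_rot (he d hd).1 (he d hd).2) n a hn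

lemma reachable_of_walk (d : H.Dart) {p q : W} (w : (H.deleteEdges {d.edge}).Walk p q)
    (a b : H.Dart) (ha : a.fst = p) (hb : b.fst = q) :
    (ρ.cubicExpansion.deleteEdges {s((d, 0), (d.symm, 0))}).Reachable (a, 0) (b, 0) := by
  induction w generalizing a with
  | nil => exact ρ.reachable_of_fst_eq (ha.trans hb.symm) fun _ _ => by simp
  | @cons p x q hadj w ih =>
    obtain ⟨hpx, hpx_ne⟩ := (deleteEdges_adj ..).1 hadj
    let e : H.Dart := ⟨(p, x), hpx⟩
    have hcross :
        (ρ.cubicExpansion.deleteEdges {s((d, 0), (d.symm, 0))}).Adj (e, 0) (e.symm, 0) := by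
      refine (deleteEdges_adj ..).2
        ⟨by simp [cubicExpansion_adj_iff, partner, e, hpx.ne], fun he => hpx_ne ?_⟩
      refine (dart_edge_eq_iff e d).2 ?_
      rcases Sym2.eq_iff.1 (Set.mem_singleton_iff.1 he) with ⟨h, -⟩ | ⟨h, -⟩ <;>
        simp only [Prod.mk.injEq, and_true] at h <;> simp [h]
    exact (ρ.reachable_of_fst_eq ha fun _ _ => by simp).trans <|
      hcross.reachable.trans (ih e.symm rfl hb)

theorem bridgeless_cubicExpansion (hB : Bridgeless H) : Bridgeless ρ.cubicExpansion := by
  refine bridgeless_ofPerms (fun ⟨d, i⟩ => ?_) (fun ⟨d, i⟩ => ?_) <;> fin_cases i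
  · refine reachable_deleteEdges_of_adj_of_adj (G := ρ.cubicExpansion) (c := (ρ.rot.symm d, 2))
      ?_ ?_ ?_ <;> simp [cubicExpansion_adj_iff, cycleSucc, partner]
  -- `(d, 1)(d, 2)` joins two consecutive triangles of the ring: go around the other way.
  · show (ρ.cubicExpansion.deleteEdges {s((d, 1), (d, 2))}).Reachable (d, 1) (d, 2)
    have h₀ : ρ.cubicExpansion.Adj (d, 0) (d, 1) := by simp [cubicExpansion_adj_iff, cycleSucc]
    have h₂ : ρ.cubicExpansion.Adj (ρ.rot d, 0) (d, 2) := by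
      simp [cubicExpansion_adj_iff, cycleSucc]
    have hround := ρ.reachable_of_fst_eq (e := s((d, 1), (d, 2))) (ρ.fst_rot d) fun e he => by
      simp [he]
    exact (h₀.deleteEdges_of_notMem (by simp)).symm.reachable.trans <|
      hround.symm.trans (h₂.deleteEdges_of_notMem (by simp)).reachable
  · refine reachable_deleteEdges_of_adj_of_adj (G := ρ.cubicExpansion) (c := (ρ.rot d, 1))
      ?_ ?_ ?_ <;> simp [cubicExpansion_adj_iff, cycleSucc, partner]
  · have hd := hB d.edge d.edge_mem
    rw [Dart.edge, isBridge_iff, not_not] at hd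
    exact ρ.reachable_of_walk d hd.some d d.symm rfl rfl
  · refine reachable_deleteEdges_of_adj_of_adj (G := ρ.cubicExpansion) (c := (d, 0))
      ?_ ?_ ?_ <;> simp [cubicExpansion_adj_iff, cycleSucc, partner]
  · refine reachable_deleteEdges_of_adj_of_adj (G := ρ.cubicExpansion) (c := (ρ.rot d, 0))
      ?_ ?_ ?_ <;> simp [cubicExpansion_adj_iff, cycleSucc, partner]

lemma fst_eq_or_of_adj {x y : H.Dart × Fin 3} (h : ρ.cubicExpansion.Adj x y) :
    x.1.fst = y.1.fst ∨ x.2 = 0 ∧ y = (x.1.symm, 0) := by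
  obtain ⟨d, i⟩ := x
  obtain ⟨-, rfl | rfl | rfl⟩ := ρ.cubicExpansion_adj_iff.1 h <;> fin_cases i <;>
    simp [cycleSucc, partner, fst_rot, fst_rot_symm]

theorem hasNZF_of_cubicExpansion [Fintype W] [Fintype H.Dart] {d : ℕ} {r : ℝ}
    (h : HasNZF ρ.cubicExpansion d r) : HasNZF H d r := by
  refine HasNZF.of_contraction (fun x => x.1.fst) (fun x y hxy hne => ?_) (fun u v huv => ?_)
    (fun x y x' y' hxy hxy' hne hx hy => ?_) h
  · obtain ⟨-, rfl⟩ := (ρ.fst_eq_or_of_adj hxy).resolve_left hne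
    exact x.1.adj
  · exact ⟨(⟨(u, v), huv⟩, 0), (⟨(v, u), huv.symm⟩, 0), rfl, rfl,
      by simp [cubicExpansion_adj_iff, partner, huv.ne]⟩
  · obtain ⟨hx₀, rfl⟩ := (ρ.fst_eq_or_of_adj hxy).resolve_left hne
    obtain ⟨hx'₀, rfl⟩ := (ρ.fst_eq_or_of_adj hxy').resolve_left (hx ▸ hy ▸ hne)
    have : x'.1 = x.1 := Dart.ext _ _ (Prod.ext hx hy)
    exact ⟨Prod.ext this (hx'₀.trans hx₀.symm), by rw [this]⟩

end RotationSystem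

end SimpleGraph

theorem stmt_12_general (d : ℕ) (r : ℝ)
    (hcubic : ∀ (V : Type) [Fintype V] (G : SimpleGraph V) [DecidableRel G.Adj],
      Bridgeless G → (∀ v, G.degree v = 3) → HasNZF G d r) :
    ∀ (W : Type) [Fintype W] (H : SimpleGraph W), Bridgeless H → HasNZF H d r := by
  intro W _ H hB
  classical
  obtain ⟨ρ⟩ := SimpleGraph.nonempty_rotationSystem H
  exact ρ.hasNZF_of_cubicExpansion (hcubic _ ρ.cubicExpansion (ρ.bridgeless_cubicExpansion hB)
    (ρ.isRegularOfDegree_cubicExpansion hB))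

/-- If every bridgeless cubic graph admits an `(r,d)`-NZF, then every bridgeless graph
admits an `(r,d)`-NZF (for `d ≥ 1` and real `r ≥ 2`). -/
theorem stmt_12 (d : ℕ) (hd : 1 ≤ d) (r : ℝ) (hr : 2 ≤ r)
    (hcubic : ∀ (V : Type) [Fintype V] (G : SimpleGraph V) [DecidableRel G.Adj],
      Bridgeless G → (∀ v, G.degree v = 3) → HasNZF G d r) :
    ∀ (W : Type) [Fintype W] (H : SimpleGraph W), Bridgeless H → HasNZF H d r :=
  stmt_12_general d r hcubic
end
end

section
/- If G is a cubic graph with odd-girth g (the length of a shortest odd cycle), and G admits an (r,2)-NZF, then the wheel W_g admits an (r,2)-NZF; hence φ₂(G) ≥ φ₂(W_g). -/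
open scoped BigOperators

noncomputable section

/-- Auxiliary flow on the wheel built from a flow on `G`. -/
def wheelFlow {V : Type} (g : ℕ) (c w : ZMod g → V)
    (f : V → V → EuclideanSpace ℝ (Fin 2)) :
    Option (ZMod g) → Option (ZMod g) → EuclideanSpace ℝ (Fin 2)
  | none, none => 0
  | some i, none => f (c i) (w i)
  | none, some j => - (f (c j) (w j))
  | some i, some j => if j = i + 1 ∨ i = j + 1 then f (c i) (c j) else 0

/-- If `G` is a cubic graph with odd-girth `g` (it contains an odd cycle of length `g` and
no shorter odd cycle) admitting an `(r,2)`-NZF, then the wheel `W_g` admits an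
`(r,2)`-NZF; hence `φ₂(G) ≥ φ₂(W_g)`. -/
theorem stmt_18 {V : Type} [Fintype V] (G : SimpleGraph V) [DecidableRel G.Adj]
    (hcubic : ∀ v, G.degree v = 3) (g : ℕ) [NeZero g] (hodd : Odd g)
    (hcycle : ∃ c : ZMod g → V, Function.Injective c ∧ ∀ i, G.Adj (c i) (c (i + 1)))
    (hmin : ∀ k : ℕ, Odd k →
      (∃ c : ZMod k → V, Function.Injective c ∧ ∀ i, G.Adj (c i) (c (i + 1))) → g ≤ k)
    (r : ℝ) (hG : HasNZF G 2 r) :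
    HasNZF (wheelGraph g) 2 r := by
  classical
  obtain ⟨f, hskew, hzero, hnorm, hkirch⟩ := hG
  obtain ⟨c, hinj, hcyc⟩ := hcycle
  -- g ≥ 3
  have hg1 : g ≠ 1 := by
    rintro rfl
    exact (hcyc 0).ne (congrArg c (Subsingleton.elim _ _))
  have hg3 : 3 ≤ g := by
    obtain ⟨m, rfl⟩ := hodd; omega
  have h10 : (1 : ZMod g) ≠ 0 := by
    intro h
    exact hg1 (Nat.dvd_one.mp ((CharP.cast_eq_zero_iff (ZMod g) g 1).mp (by exact_mod_cast h)))
  have h20 : (2 : ZMod g) ≠ 0 := by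
    intro h
    have : g ∣ 2 := (CharP.cast_eq_zero_iff (ZMod g) g 2).mp (by exact_mod_cast h)
    have := Nat.le_of_dvd (by norm_num) this
    omega
  have hidx : ∀ i : ZMod g, i - 1 ≠ i + 1 := by
    intro i h
    apply h20
    have : (2 : ZMod g) = (i + 1) - (i - 1) := by ring
    rw [this, ← h, sub_self]
  have hadjm : ∀ i, G.Adj (c i) (c (i - 1)) := by
    intro i
    have := (hcyc (i - 1)).symm
    rwa [sub_add_cancel] at this
  -- third neighbor
  have hthird : ∀ i : ZMod g, ∃ x, G.Adj (c i) x ∧ x ≠ c (i - 1) ∧ x ≠ c (i + 1) := by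
    intro i
    by_contra h
    push_neg at h
    have hsub : G.neighborFinset (c i) ⊆ {c (i - 1), c (i + 1)} := by
      intro x hx
      rw [SimpleGraph.mem_neighborFinset] at hx
      by_cases h1 : x = c (i - 1)
      · simp [h1]
      · simp [h x hx h1]
    have hc := Finset.card_le_card hsub
    have h3 : (G.neighborFinset (c i)).card = 3 := hcubic (c i)
    have h2 : ({c (i - 1), c (i + 1)} : Finset V).card ≤ 2 :=
      (Finset.card_insert_le _ _).trans (by simp)
    omega
  choose w hw1 hw2 hw3 using hthird
  have hne1 : ∀ i : ZMod g, c (i - 1) ≠ c (i + 1) := fun i h => hidx i (hinj h)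
  -- neighbor finset determination
  have hnbr : ∀ i, G.neighborFinset (c i) = {c (i - 1), c (i + 1), w i} := by
    intro i
    have hsub : ({c (i - 1), c (i + 1), w i} : Finset V) ⊆ G.neighborFinset (c i) := by
      intro x hx
      simp only [Finset.mem_insert, Finset.mem_singleton] at hx
      rw [SimpleGraph.mem_neighborFinset]
      rcases hx with rfl | rfl | rfl
      · exact hadjm i
      · exact hcyc i
      · exact hw1 i
    have hcard : ({c (i - 1), c (i + 1), w i} : Finset V).card = 3 := by
      rw [Finset.card_insert_of_notMem (by simp [hne1 i, (hw2 i).symm]),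
        Finset.card_insert_of_notMem (by simp [(hw3 i).symm]), Finset.card_singleton]
    exact (Finset.eq_of_subset_of_card_le hsub (by rw [hcard]; exact (hcubic (c i)).le)).symm
  -- local Kirchhoff
  have hsum3 : ∀ i, f (c i) (c (i - 1)) + f (c i) (c (i + 1)) + f (c i) (w i) = 0 := by
    intro i
    have h1 : ∑ u, f (c i) u = 0 := hkirch (c i)
    rw [← Finset.sum_subset (Finset.subset_univ (G.neighborFinset (c i)))
      (fun x _ hx => hzero _ x (by rwa [SimpleGraph.mem_neighborFinset] at hx))] at h1
    rw [hnbr i, Finset.sum_insert (by simp [hne1 i, (hw2 i).symm]),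
      Finset.sum_insert (by simp [(hw3 i).symm]), Finset.sum_singleton] at h1
    abel_nf at h1 ⊢
    exact h1
  have hspoke : ∀ i, f (c i) (w i) = -(f (c i) (c (i - 1))) - f (c i) (c (i + 1)) := by
    intro i
    have h := hsum3 i
    have : f (c i) (w i) = -(f (c i) (c (i - 1)) + f (c i) (c (i + 1))) :=
      eq_neg_of_add_eq_zero_right h
    rw [this, neg_add]
    abel
  -- reindexing
  have hrei : ∑ j : ZMod g, f (c (j + 1)) (c j) = ∑ j : ZMod g, f (c j) (c (j - 1)) := by
    apply Fintype.sum_equiv (Equiv.addRight (1 : ZMod g))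
    intro j
    simp
  have hsp : ∑ j : ZMod g, f (c j) (w j) = 0 := by
    calc ∑ j : ZMod g, f (c j) (w j)
        = ∑ j : ZMod g, (-(f (c j) (c (j - 1))) - f (c j) (c (j + 1))) :=
          Finset.sum_congr rfl fun j _ => hspoke j
      _ = -(∑ j : ZMod g, f (c j) (c (j - 1))) - ∑ j : ZMod g, f (c j) (c (j + 1)) := by
          rw [Finset.sum_sub_distrib, Finset.sum_neg_distrib]
      _ = 0 := by
          rw [← hrei]
          have : ∑ j : ZMod g, f (c (j + 1)) (c j) = -∑ j : ZMod g, f (c j) (c (j + 1)) := by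
            rw [← Finset.sum_neg_distrib]
            exact Finset.sum_congr rfl fun j _ => hskew _ _
          rw [this]
          abel
  have wadj : ∀ i j : ZMod g, (wheelGraph g).Adj (some i) (some j) ↔
      some i ≠ some j ∧ (j = i + 1 ∨ i = j + 1) := fun i j => by
    simp [wheelGraph, SimpleGraph.fromRel_adj]
  have wadjn : ∀ i : ZMod g, (wheelGraph g).Adj (some i) none := fun i => by
    simp [wheelGraph, SimpleGraph.fromRel_adj]
  refine ⟨wheelFlow g c w f, ?_, ?_, ?_, ?_⟩
  · rintro (_ | i) (_ | j) <;> simp only [wheelFlow, neg_neg, neg_zero]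
    by_cases h : j = i + 1 ∨ i = j + 1
    · rw [if_pos h, if_pos h.symm]
      exact hskew _ _
    · rw [if_neg h, if_neg (fun hh => h hh.symm), neg_zero]
  · rintro (_ | i) (_ | j) h <;> simp only [wheelFlow]
    · exact absurd (wadjn j).symm h
    · exact absurd (wadjn i) h
    · rw [wadj] at h
      push_neg at h
      rw [if_neg]
      intro hc
      rcases eq_or_ne i j with rfl | hij
      · rcases hc with h1 | h1 <;> exact h10 (left_eq_add.mp h1)
      · obtain ⟨h1, h2⟩ := h (by simpa using hij)
        rcases hc with hc | hc
        exacts [h1 hc, h2 hc]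
  · rintro (_ | i) (_ | j) h <;> simp only [wheelFlow]
    · exact absurd h (by simp [wheelGraph, SimpleGraph.fromRel_adj])
    · rw [norm_neg]; exact hnorm _ _ (hw1 j)
    · exact hnorm _ _ (hw1 i)
    · rw [wadj] at h
      obtain ⟨hne, hor⟩ := h
      rw [if_pos hor]
      rcases hor with h1 | h1
      · subst h1
        exact hnorm _ _ (hcyc i)
      · subst h1
        exact hnorm _ _ (hcyc j).symm
  · rintro (_ | i)
    · rw [Fintype.sum_option]
      simp only [wheelFlow]
      rw [zero_add, Finset.sum_neg_distrib, hsp, neg_zero]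
    · rw [Fintype.sum_option]
      simp only [wheelFlow]
      have hsplit : ∀ j : ZMod g,
          (if j = i + 1 ∨ i = j + 1 then f (c i) (c j) else 0) =
          (if j = i + 1 then f (c i) (c (i + 1)) else 0) +
          (if j = i - 1 then f (c i) (c (i - 1)) else 0) := by
        intro j
        by_cases h1 : j = i + 1
        · subst h1
          rw [if_pos (Or.inl rfl), if_pos rfl, if_neg (Ne.symm (hidx i)), add_zero]
        · by_cases h2 : i = j + 1
          · have hj : j = i - 1 := by rw [h2]; ring
            subst hj
            rw [if_pos (Or.inr h2), if_neg h1, if_pos rfl, zero_add]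
          · have hj : j ≠ i - 1 := fun hh => h2 (by rw [hh]; ring)
            rw [if_neg (by tauto), if_neg h1, if_neg hj, add_zero]
      rw [Finset.sum_congr rfl fun j _ => hsplit j, Finset.sum_add_distrib,
        Finset.sum_ite_eq' Finset.univ (i + 1) (fun _ => f (c i) (c (i + 1))),
        Finset.sum_ite_eq' Finset.univ (i - 1) (fun _ => f (c i) (c (i - 1))),
        if_pos (Finset.mem_univ _), if_pos (Finset.mem_univ _)]
      have h := hsum3 i
      rw [← h]
      abel
end
end

section
/- Every 3-edge-colourable cubic graph admits an oriented 4-cycle double cover; consequently every 3-edge-colourable cubic graph G admits a (1+√2, 2)-NZF, so φ₂(G) ≤ 1+√2. -/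
open scoped BigOperators

noncomputable section

namespace OCDCAux
open Function Equiv
open scoped Classical

variable {V : Type} {a b : V → V}

variable (a b) in
/-- the permutation `b ∘ a` built from two involutions -/
def piperm (ha : Function.Involutive a) (hb : Function.Involutive b) : Equiv.Perm V :=
  (ha.toPerm a).trans (hb.toPerm b)

variable (ha : Function.Involutive a) (hb : Function.Involutive b)

local notation "π" => piperm a b ha hb
local notation "A" => Function.Involutive.toPerm a ha
local notation "B" => Function.Involutive.toPerm b hb

lemma piperm_apply (v : V) : (π) v = b (a v) := rfl

lemma A_apply (v : V) : (A) v = a v := rfl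
lemma B_apply (v : V) : (B) v = b v := rfl
lemma Ainv_apply (v : V) : (A)⁻¹ v = a v := rfl
lemma Binv_apply (v : V) : (B)⁻¹ v = b v := rfl
lemma pinv_apply (v : V) : (π)⁻¹ v = a (b v) := rfl

lemma conjA : (A) * (π) * (A)⁻¹ = (π)⁻¹ := by
  ext v
  show a (b (a (a v))) = a (b v)
  rw [ha v]

lemma conjB : (B) * (π) * (B)⁻¹ = (π)⁻¹ := by
  ext v
  show b (b (a (b v))) = a (b v)
  rw [hb (a (b v))]

lemma conjA_zpow (j : ℤ) : (A) * (π)^j * (A)⁻¹ = (π)^(-j) := by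
  rw [← conj_zpow, conjA, inv_zpow, zpow_neg]

lemma conjB_zpow (j : ℤ) : (B) * (π)^j * (B)⁻¹ = (π)^(-j) := by
  rw [← conj_zpow, conjB, inv_zpow, zpow_neg]

lemma apply_conjA (j : ℤ) (w : V) : a (((π)^j) w) = ((π)^(-j)) (a w) := by
  have h := congrArg (fun f : Equiv.Perm V => f (a w)) (conjA_zpow ha hb j)
  simp only [Equiv.Perm.mul_apply, Ainv_apply, A_apply, ha w] at h
  exact h

lemma apply_conjB (j : ℤ) (w : V) : b (((π)^j) w) = ((π)^(-j)) (b w) := by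
  have h := congrArg (fun f : Equiv.Perm V => f (b w)) (conjB_zpow ha hb j)
  simp only [Equiv.Perm.mul_apply, Binv_apply, B_apply, hb w] at h
  exact h

lemma noSame (hfa : ∀ v, a v ≠ v) (hfb : ∀ v, b v ≠ v) (v : V) :
    ¬ (π).SameCycle v (a v) := by
  rintro ⟨k, hk⟩
  rcases Int.even_or_odd k with ⟨j, hj⟩ | ⟨j, hj⟩
  · apply hfa (((π)^j) v)
    have h1 := apply_conjA ha hb j v
    rw [← hk, ← Equiv.Perm.mul_apply, ← zpow_add] at h1
    have he : -j + k = j := by omega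
    rwa [he] at h1
  · apply hfb (((π)^(j+1)) v)
    have hbv : b v = ((π)^(k+1)) v := by
      have h2 : b v = (π) (a v) := by rw [piperm_apply ha hb, ha v]
      rw [h2, ← hk, ← Equiv.Perm.mul_apply, ← zpow_one_add, add_comm 1 k]
    have h1 : b (((π)^(j+1)) v) = ((π)^(-(j+1))) (b v) := apply_conjB ha hb _ _
    rw [h1, hbv, ← Equiv.Perm.mul_apply, ← zpow_add]
    have he : -(j+1) + (k+1) = j + 1 := by omega
    rw [he]

lemma sc_map {x y : V} (h : (π).SameCycle x y) : (π).SameCycle (a x) (a y) := by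
  obtain ⟨i, hi⟩ := h
  exact ⟨-i, by rw [← hi, ← apply_conjA]⟩

/-- the setoid whose classes are `π`-cycles merged with their `a`-mirror -/
def st : Setoid V where
  r v w := (π).SameCycle v w ∨ (π).SameCycle v (a w)
  iseqv := by
    constructor
    · intro v; exact Or.inl (Equiv.Perm.SameCycle.refl _ _)
    · rintro v w (h | h)
      · exact Or.inl h.symm
      · refine Or.inr ?_
        have h2 := (sc_map ha hb h).symm
        rwa [ha w] at h2
    · rintro v w u (h1 | h1) (h2 | h2)
      · exact Or.inl (h1.trans h2)
      · exact Or.inr (h1.trans h2)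
      · exact Or.inr (h1.trans (sc_map ha hb h2))
      · refine Or.inl ?_
        have h3 := sc_map ha hb h2
        rw [ha u] at h3
        exact h1.trans h3

/-- sign function: a proper 2-colouring of the 2-factor given by the two matchings -/
def sgn (v : V) : ZMod 2 :=
  if (π).SameCycle (Quotient.out (Quotient.mk (st ha hb) v)) v then 0 else 1

lemma st_rel {v w : V} (h : (st ha hb).r v w) :
    Quotient.mk (st ha hb) v = Quotient.mk (st ha hb) w := Quotient.sound h

lemma out_rel (v : V) : (st ha hb).r (Quotient.out (Quotient.mk (st ha hb) v)) v :=
  Quotient.exact (Quotient.out_eq _)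

lemma sgn_eq_of_sc {v w : V} (h : (π).SameCycle v w) : sgn ha hb v = sgn ha hb w := by
  have hm : Quotient.mk (st ha hb) w = Quotient.mk (st ha hb) v :=
    st_rel ha hb (Or.inl h.symm)
  unfold sgn
  rw [hm]
  by_cases h' : (π).SameCycle (Quotient.out (Quotient.mk (st ha hb) v)) v
  · rw [if_pos h', if_pos (h'.trans h)]
  · rw [if_neg h', if_neg (fun hc => h' (hc.trans h.symm))]

lemma sgn_flip_a (hfa : ∀ v, a v ≠ v) (hfb : ∀ v, b v ≠ v) (v : V) :
    sgn ha hb (a v) = sgn ha hb v + 1 := by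
  have hm : Quotient.mk (st ha hb) (a v) = Quotient.mk (st ha hb) v :=
    st_rel ha hb (Or.inr (Equiv.Perm.SameCycle.refl _ _))
  have ho := out_rel ha hb v
  have hnb : ¬ ((π).SameCycle (Quotient.out (Quotient.mk (st ha hb) v)) v ∧
      (π).SameCycle (Quotient.out (Quotient.mk (st ha hb) v)) (a v)) := by
    rintro ⟨h1, h2⟩
    exact noSame ha hb hfa hfb v (h1.symm.trans h2)
  unfold sgn
  rw [hm]
  rcases ho with h | h
  · rw [if_pos h, if_neg (fun hc => hnb ⟨h, hc⟩)]
    decide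
  · rw [if_pos h, if_neg (fun hc => hnb ⟨hc, h⟩)]
    decide

lemma sgn_flip_b (hfa : ∀ v, a v ≠ v) (hfb : ∀ v, b v ≠ v) (v : V) :
    sgn ha hb (b v) = sgn ha hb v + 1 := by
  have h : (π).SameCycle (a v) (b v) := ⟨1, by simp [piperm_apply ha hb, ha v]⟩
  rw [← sgn_eq_of_sc ha hb h, sgn_flip_a ha hb hfa hfb]

include ha hb in
theorem exists_sgn (hfa : ∀ v, a v ≠ v) (hfb : ∀ v, b v ≠ v) :
    ∃ s : V → ZMod 2, (∀ v, s (a v) = s v + 1) ∧ (∀ v, s (b v) = s v + 1) :=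
  ⟨sgn ha hb, sgn_flip_a ha hb hfa hfb, sgn_flip_b ha hb hfa hfb⟩




def gam : Fin 3 → ZMod 2 × ZMod 2 := ![(1,0),(0,1),(1,1)]
def off1 : Fin 3 → ZMod 2 × ZMod 2 := ![(0,0),(1,0),(1,1)]
def off2 : Fin 3 → ZMod 2 × ZMod 2 := ![(0,0),(0,1),(1,0)]

lemma add_gam_gam : ∀ (c : Fin 3) (z : ZMod 2 × ZMod 2), z + gam c + gam c = z := by decide
lemma add_gam_ne : ∀ (c : Fin 3) (z : ZMod 2 × ZMod 2), z + gam c ≠ z := by decide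

lemma key0 : ∀ (pv qv rv pw qw rw : ZMod 2), qw = qv + 1 → rw = rv + 1 →
    (qw, qw + rw) + (if pw + qw + rw = 0 then off1 0 else off2 0) =
    (qv, qv + rv) + (if pv + qv + rv = 0 then off1 0 else off2 0) + gam 0 := by decide

lemma key1 : ∀ (pv qv rv pw qw rw : ZMod 2), pw = pv + 1 → rw = rv + 1 →
    (qw, qw + rw) + (if pw + qw + rw = 0 then off1 1 else off2 1) =
    (qv, qv + rv) + (if pv + qv + rv = 0 then off1 1 else off2 1) + gam 1 := by decide

lemma key2 : ∀ (pv qv rv pw qw rw : ZMod 2), pw = pv + 1 → qw = qv + 1 →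
    (qw, qw + rw) + (if pw + qw + rw = 0 then off1 2 else off2 2) =
    (qv, qv + rv) + (if pv + qv + rv = 0 then off1 2 else off2 2) + gam 2 := by decide

lemma kern1 : ∀ (al i : ZMod 2 × ZMod 2),
    (if al + off1 0 = i then (1:ℤ) else if al + off1 0 + gam 0 = i then -1 else 0) +
    ((if al + off1 1 = i then (1:ℤ) else if al + off1 1 + gam 1 = i then -1 else 0) +
     (if al + off1 2 = i then (1:ℤ) else if al + off1 2 + gam 2 = i then -1 else 0)) = 0 := by
  decide

lemma kern2 : ∀ (al i : ZMod 2 × ZMod 2),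
    (if al + off2 0 = i then (1:ℤ) else if al + off2 0 + gam 0 = i then -1 else 0) +
    ((if al + off2 1 = i then (1:ℤ) else if al + off2 1 + gam 1 = i then -1 else 0) +
     (if al + off2 2 = i then (1:ℤ) else if al + off2 2 + gam 2 = i then -1 else 0)) = 0 := by
  decide

lemma tele1 : ∀ al : ZMod 2 × ZMod 2,
    al + off1 0 + gam 0 = al + off1 1 ∧ al + off1 1 + gam 1 = al + off1 2 ∧
    al + off1 2 + gam 2 = al + off1 0 := by decide

lemma tele2 : ∀ al : ZMod 2 × ZMod 2,
    al + off2 0 + gam 0 = al + off2 2 ∧ al + off2 1 + gam 1 = al + off2 0 ∧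
    al + off2 2 + gam 2 = al + off2 1 := by decide

/-- the four corners of the unit square -/
def wv (z : ZMod 2 × ZMod 2) : EuclideanSpace ℝ (Fin 2) := vec2 z.1.val z.2.val

lemma vec2_norm_sub (x y x' y' : ℝ) :
    ‖vec2 x y - vec2 x' y'‖ = Real.sqrt ((x - x')^2 + (y - y')^2) := by
  rw [EuclideanSpace.norm_eq]
  congr 1
  rw [Fin.sum_univ_two]
  have h0 : (vec2 x y - vec2 x' y') 0 = x - x' := rfl
  have h1 : (vec2 x y - vec2 x' y') 1 = y - y' := rfl
  rw [h0, h1, Real.norm_eq_abs, Real.norm_eq_abs, sq_abs, sq_abs]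

lemma wv_norm (z1 z2 : ZMod 2 × ZMod 2) (h : z1 ≠ z2) :
    1 ≤ ‖wv z1 - wv z2‖ ∧ ‖wv z1 - wv z2‖ ≤ Real.sqrt 2 := by
  have hval : ∀ u : ZMod 2, u.val = 0 ∨ u.val = 1 := by decide
  have hinj : ∀ u w : ZMod 2, u.val = w.val → u = w := by decide
  have hzz : z1.1 ≠ z2.1 ∨ z1.2 ≠ z2.2 := by
    by_contra hc
    push_neg at hc
    exact h (Prod.ext hc.1 hc.2)
  have hd : ∀ u w : ZMod 2, u ≠ w → ((u.val:ℝ) - w.val)^2 = 1 := by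
    intro u w huw
    rcases hval u with h'|h' <;> rcases hval w with h''|h'' <;> rw [h', h''] <;>
      first
        | exact absurd (hinj u w (h'.trans h''.symm)) huw
        | norm_num
  have hb : ∀ u w : ZMod 2, 0 ≤ ((u.val:ℝ) - w.val)^2 ∧ ((u.val:ℝ) - w.val)^2 ≤ 1 := by
    intro u w
    rcases hval u with h'|h' <;> rcases hval w with h''|h'' <;> rw [h', h''] <;> norm_num
  have hs1 : 1 ≤ ((z1.1.val:ℝ) - z2.1.val)^2 + ((z1.2.val:ℝ) - z2.2.val)^2 := by
    rcases hzz with hz|hz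
    · have := hd _ _ hz
      have h2 := (hb z1.2 z2.2).1
      linarith
    · have := hd _ _ hz
      have h2 := (hb z1.1 z2.1).1
      linarith
  have hs2 : ((z1.1.val:ℝ) - z2.1.val)^2 + ((z1.2.val:ℝ) - z2.2.val)^2 ≤ 2 := by
    have h1 := (hb z1.1 z2.1).2
    have h2 := (hb z1.2 z2.2).2
    linarith
  unfold wv
  rw [vec2_norm_sub]
  exact ⟨Real.one_le_sqrt.mpr hs1, Real.sqrt_le_sqrt hs2⟩



end OCDCAux

open OCDCAux

/-- Every 3-edge-colourable cubic graph (here a proper 3-edge-colouring is encoded as a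
symmetric function `col` on adjacent pairs, giving distinct colours to distinct edges
sharing an endpoint) admits an oriented 4-cycle double cover; consequently it admits a
`(1+√2, 2)`-NZF, so `φ₂(G) ≤ 1+√2`. -/
theorem stmt_19 {V : Type} [Fintype V] (G : SimpleGraph V) [DecidableRel G.Adj]
    (hcubic : ∀ v, G.degree v = 3) (col : V → V → Fin 3)
    (hsym : ∀ u v, col u v = col v u)
    (hproper : ∀ u v w, G.Adj u v → G.Adj u w → v ≠ w → col u v ≠ col u w) :
    (∃ g : Fin 4 → V → V → ℤ, IsOCDC G 4 g) ∧ HasNZF G 2 (1 + Real.sqrt 2) := by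
  classical
  have hex : ∀ (v : V) (c : Fin 3), ∃! u, G.Adj v u ∧ col v u = c := by
    intro v c
    have hcard : (G.neighborFinset v).card = 3 := by
      rw [G.card_neighborFinset_eq_degree]; exact hcubic v
    have hinj : Set.InjOn (col v) (G.neighborFinset v) := by
      intro u hu w hw hcw
      by_contra hne
      exact hproper v u w (by simpa using hu) (by simpa using hw) hne hcw
    have himage : (G.neighborFinset v).image (col v) = Finset.univ := by
      apply Finset.eq_univ_of_card
      rw [Finset.card_image_of_injOn hinj, hcard]
      simp
    have hc : c ∈ (G.neighborFinset v).image (col v) := by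
      rw [himage]; exact Finset.mem_univ c
    obtain ⟨u, hu, hcu⟩ := Finset.mem_image.mp hc
    refine ⟨u, ⟨by simpa using hu, hcu⟩, ?_⟩
    rintro u' ⟨hadj', hcol'⟩
    by_contra hne
    exact hproper v u' u hadj' (by simpa using hu) hne (by rw [hcol', hcu])
  set m : Fin 3 → V → V := fun c v => ((hex v c).exists).choose with hmdef
  have hm_adj : ∀ c v, G.Adj v (m c v) := fun c v => ((hex v c).exists).choose_spec.1
  have hm_col : ∀ c v, col v (m c v) = c := fun c v => ((hex v c).exists).choose_spec.2
  have hm_uniq : ∀ c v u, G.Adj v u → col v u = c → u = m c v := by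
    intro c v u h1 h2
    exact (hex v c).unique ⟨h1, h2⟩ ⟨hm_adj c v, hm_col c v⟩
  have hm_invol : ∀ c, Function.Involutive (m c) := by
    intro c v
    exact (hm_uniq c (m c v) v (hm_adj c v).symm (by rw [hsym, hm_col])).symm
  have hm_ne : ∀ c v, m c v ≠ v := fun c v => (hm_adj c v).ne'
  obtain ⟨p, hp1, hp2⟩ := OCDCAux.exists_sgn (hm_invol 1) (hm_invol 2) (hm_ne 1) (hm_ne 2)
  obtain ⟨q, hq0, hq2⟩ := OCDCAux.exists_sgn (hm_invol 0) (hm_invol 2) (hm_ne 0) (hm_ne 2)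
  obtain ⟨r, hr0, hr1⟩ := OCDCAux.exists_sgn (hm_invol 0) (hm_invol 1) (hm_ne 0) (hm_ne 1)
  set ξ : V → Fin 3 → ZMod 2 × ZMod 2 := fun v c =>
    (q v, q v + r v) + (if p v + q v + r v = 0 then off1 c else off2 c) with hxidef
  have hkey : ∀ (c : Fin 3) (v : V), ξ (m c v) c = ξ v c + gam c := by
    intro c v
    fin_cases c
    · simp only [hxidef]
      exact key0 (p v) (q v) (r v) (p (m 0 v)) (q (m 0 v)) (r (m 0 v)) (hq0 v) (hr0 v)
    · simp only [hxidef]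
      exact key1 (p v) (q v) (r v) (p (m 1 v)) (q (m 1 v)) (r (m 1 v)) (hp1 v) (hr1 v)
    · simp only [hxidef]
      exact key2 (p v) (q v) (r v) (p (m 2 v)) (q (m 2 v)) (r (m 2 v)) (hp2 v) (hq2 v)
  have hcol_eq : ∀ v w, G.Adj v w → w = m (col v w) v := fun v w h => hm_uniq _ v w h rfl
  have hskewξ : ∀ v w, G.Adj v w → ξ w (col v w) = ξ v (col v w) + gam (col v w) := by
    intro v w h
    rw [hcol_eq v w h, hm_col]
    exact hkey _ v

  set gI : ZMod 2 × ZMod 2 → V → V → ℤ := fun i v w =>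
    if G.Adj v w then
      (if ξ v (col v w) = i then 1 else if ξ v (col v w) + gam (col v w) = i then -1 else 0)
    else 0 with hgIdef
  have hgI_supp : ∀ i v w, ¬ G.Adj v w → gI i v w = 0 := by
    intro i v w h
    simp only [hgIdef, if_neg h]
  have hgI_skew : ∀ i v w, gI i v w = - gI i w v := by
    intro i v w
    by_cases h : G.Adj w v
    · have h' : G.Adj v w := h.symm
      simp only [hgIdef, if_pos h, if_pos h']
      rw [hsym v w, hskewξ w v h, add_gam_gam]
      by_cases h1 : ξ w (col w v) = i
      · have h2 : ξ w (col w v) + gam (col w v) ≠ i :=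
          fun hc => add_gam_ne (col w v) (ξ w (col w v)) (hc.trans h1.symm)
        rw [if_neg h2, if_pos h1, if_pos h1]
      · by_cases h2 : ξ w (col w v) + gam (col w v) = i
        · rw [if_pos h2, if_neg h1, if_pos h2]; norm_num
        · rw [if_neg h2, if_neg h1, if_neg h1, if_neg h2, neg_zero]
    · have h' : ¬ G.Adj v w := fun hc => h hc.symm
      simp only [hgIdef, if_neg h, if_neg h', neg_zero]
  have hfin3 : ∀ c : Fin 3, c = 0 ∨ c = 1 ∨ c = 2 := by decide
  have hmne : ∀ (c c' : Fin 3), c ≠ c' → ∀ v, m c v ≠ m c' v := by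
    intro c c' hne v hc
    apply hne
    rw [← hm_col c v, hc, hm_col]
  have hgI_kirch : ∀ i v, ∑ u, gI i v u = 0 := by
    intro i v
    have hzero : ∀ u, u ∉ ({m 0 v, m 1 v, m 2 v} : Finset V) → gI i v u = 0 := by
      intro u hu
      simp only [hgIdef]
      rw [if_neg]
      intro hadj
      apply hu
      rcases hfin3 (col v u) with hc|hc|hc <;>
        rw [hcol_eq v u hadj, hc] <;>
        simp [Finset.mem_insert, Finset.mem_singleton]
    have hss : ∑ u, gI i v u = ∑ u ∈ ({m 0 v, m 1 v, m 2 v} : Finset V), gI i v u :=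
      (Finset.sum_subset (Finset.subset_univ _) (fun u _ hu => hzero u hu)).symm
    rw [hss]
    rw [Finset.sum_insert (by
      simp only [Finset.mem_insert, Finset.mem_singleton]
      push_neg
      exact ⟨hmne 0 1 (by decide) v, hmne 0 2 (by decide) v⟩)]
    rw [Finset.sum_insert (by
      simp only [Finset.mem_singleton]
      exact hmne 1 2 (by decide) v)]
    rw [Finset.sum_singleton]
    simp only [hgIdef, if_pos (hm_adj 0 v), if_pos (hm_adj 1 v), if_pos (hm_adj 2 v),
      hm_col 0 v, hm_col 1 v, hm_col 2 v]
    by_cases hF : p v + q v + r v = 0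
    · simp only [hxidef, if_pos hF]
      exact kern1 (q v, q v + r v) i
    · simp only [hxidef, if_neg hF]
      exact kern2 (q v, q v + r v) i
  have hgI_vals : ∀ i v w, gI i v w = 0 ∨ gI i v w = 1 ∨ gI i v w = -1 := by
    intro i v w
    simp only [hgIdef]
    by_cases h : G.Adj v w
    · rw [if_pos h]
      by_cases h1 : ξ v (col v w) = i
      · rw [if_pos h1]; tauto
      · rw [if_neg h1]
        by_cases h2 : ξ v (col v w) + gam (col v w) = i
        · rw [if_pos h2]; tauto
        · rw [if_neg h2]; tauto
    · rw [if_neg h]; tauto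
  have hgI_cyc : ∀ i, IsDirCycle G (gI i) :=
    fun i => ⟨fun u v => hgI_skew i u v, fun u v => hgI_supp i u v,
      fun u v => hgI_vals i u v, fun v => hgI_kirch i v⟩
  have hgI_cover : ∀ v w, G.Adj v w →
      gI (ξ v (col v w)) v w = 1 ∧ gI (ξ v (col v w) + gam (col v w)) v w = -1 ∧
      ∀ l, l ≠ ξ v (col v w) → l ≠ ξ v (col v w) + gam (col v w) → gI l v w = 0 := by
    intro v w h
    refine ⟨?_, ?_, ?_⟩
    · simp [hgIdef, h]
    · have hne' : ξ v (col v w) ≠ ξ v (col v w) + gam (col v w) :=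
        (add_gam_ne (col v w) (ξ v (col v w))).symm
      simp [hgIdef, h, hne']
    · intro l hl1 hl2
      simp [hgIdef, h, Ne.symm hl1, Ne.symm hl2]
  have hcard4 : Fintype.card (ZMod 2 × ZMod 2) = 4 := by simp
  set e4 : (ZMod 2 × ZMod 2) ≃ Fin 4 := Fintype.equivFinOfCardEq hcard4 with he4def
  constructor
  · refine ⟨fun i => gI (e4.symm i), ⟨fun i => hgI_cyc (e4.symm i), ?_⟩⟩
    intro u v huv
    obtain ⟨h1, h2, h3⟩ := hgI_cover u v huv
    refine ⟨e4 (ξ u (col u v)), e4 (ξ u (col u v) + gam (col u v)), ?_, ?_, ?_, ?_⟩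
    · exact fun hc => add_gam_ne (col u v) (ξ u (col u v)) (e4.injective hc).symm
    · simpa using h1
    · simpa using h2
    · intro l hl1 hl2
      refine h3 (e4.symm l) ?_ ?_
      · intro hc; apply hl1; rw [← hc, Equiv.apply_symm_apply]
      · intro hc; apply hl2; rw [← hc, Equiv.apply_symm_apply]
  · set f : V → V → EuclideanSpace ℝ (Fin 2) := fun v u =>
      if G.Adj v u then wv (ξ v (col v u)) - wv (ξ v (col v u) + gam (col v u)) else 0
      with hfdef
    refine ⟨f, ?_, ?_, ?_, ?_⟩
    · intro u v
      by_cases h : G.Adj v u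
      · have h' : G.Adj u v := h.symm
        simp only [hfdef, if_pos h, if_pos h']
        rw [hsym u v, hskewξ v u h, add_gam_gam]
        abel
      · have h' : ¬ G.Adj u v := fun hc => h hc.symm
        simp only [hfdef, if_neg h, if_neg h', neg_zero]
    · intro u v h
      simp only [hfdef, if_neg h]
    · intro u v h
      simp only [hfdef, if_pos h]
      have hw := wv_norm (ξ u (col u v)) (ξ u (col u v) + gam (col u v))
        ((add_gam_ne (col u v) (ξ u (col u v))).symm)
      have hr2 : (1 + Real.sqrt 2) - 1 = Real.sqrt 2 := by ring
      rw [hr2]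
      exact hw
    · intro v
      have hzero : ∀ u, u ∉ ({m 0 v, m 1 v, m 2 v} : Finset V) → f v u = 0 := by
        intro u hu
        simp only [hfdef]
        rw [if_neg]
        intro hadj
        apply hu
        rcases hfin3 (col v u) with hc|hc|hc <;> rw [hcol_eq v u hadj, hc] <;>
          simp [Finset.mem_insert, Finset.mem_singleton]
      have hss : ∑ u, f v u = ∑ u ∈ ({m 0 v, m 1 v, m 2 v} : Finset V), f v u :=
        (Finset.sum_subset (Finset.subset_univ _) (fun u _ hu => hzero u hu)).symm
      rw [hss]
      rw [Finset.sum_insert (by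
        simp only [Finset.mem_insert, Finset.mem_singleton]
        push_neg
        exact ⟨hmne 0 1 (by decide) v, hmne 0 2 (by decide) v⟩)]
      rw [Finset.sum_insert (by
        simp only [Finset.mem_singleton]
        exact hmne 1 2 (by decide) v)]
      rw [Finset.sum_singleton]
      simp only [hfdef, if_pos (hm_adj 0 v), if_pos (hm_adj 1 v), if_pos (hm_adj 2 v),
        hm_col 0 v, hm_col 1 v, hm_col 2 v]
      by_cases hF : p v + q v + r v = 0
      · simp only [hxidef, if_pos hF]
        obtain ⟨t1, t2, t3⟩ := tele1 (q v, q v + r v)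
        rw [t1, t2, t3]
        abel
      · simp only [hxidef, if_neg hF]
        obtain ⟨t1, t2, t3⟩ := tele2 (q v, q v + r v)
        rw [t1, t2, t3]
        abel
end
end
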